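/- arXiv:2301.11291 — 6 statements merged into one kernel-verified Lean document; each statement's English description precedes it below -/
import Mathlib

section
/- If S is a centrally supported quantum model with support model S', then S' ⪰ S and S ⪰ S' (each is a local dilation of the other). -/
open scoped Matrix Kronecker ComplexOrder

noncomputable section

namespace SelfTestPaper

/-- A finite-dimensional (POVM) quantum model for a bipartite Bell scenario:
Hilbert spaces `ℂ^dA`, `ℂ^dB`, POVMs `{M x a}` and `{N y b}`, and a unit vector `ψ`. -/
structure QModel (X Y A B : Type) [Fintype A] [Fintype B] where
  dA : ℕ
  dB : ℕ
  M : X → A → Matrix (Fin dA) (Fin dA) ℂ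
  N : Y → B → Matrix (Fin dB) (Fin dB) ℂ
  ψ : Fin dA × Fin dB → ℂ
  M_pos : ∀ x a, (M x a).PosSemidef
  M_sum : ∀ x, ∑ a, M x a = 1
  N_pos : ∀ y b, (N y b).PosSemidef
  N_sum : ∀ y, ∑ b, N y b = 1
  ψ_unit : ∑ i, star (ψ i) * ψ i = 1

variable {X Y A B : Type} [Fintype A] [Fintype B]

/-- Inner product `⟨v, w⟩` (antilinear in the first argument). -/
def qInner {n : Type} [Fintype n] (v w : n → ℂ) : ℂ := ∑ i, star (v i) * w i

/-- The model `S` realizes the correlation `p`: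
`p(a,b|x,y) = ⟨ψ|(M^x_a ⊗ N^y_b)|ψ⟩`. -/
def Realizes (S : QModel X Y A B) (p : A → B → X → Y → ℝ) : Prop :=
  ∀ a b x y, qInner S.ψ ((S.M x a ⊗ₖ S.N y b).mulVec S.ψ) = (p a b x y : ℂ)

/-- The set `C_q(X,Y,A,B)` of quantum correlations. -/
def CqSet (X Y A B : Type) [Fintype A] [Fintype B] : Set (A → B → X → Y → ℝ) :=
  {p | ∃ S : QModel X Y A B, Realizes S p}

/-- `Dilates S St` means `S ⪰ St`, i.e. `St` is a local dilation of `S`: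
there are auxiliary spaces, a unit auxiliary state and local isometries `IA`, `IB` with
`(IA ⊗ IB)(M^x_a ⊗ N^y_b)|ψ⟩ = (M̃^x_a ⊗ Ñ^y_b |ψ̃⟩) ⊗ |aux⟩` (written pointwise, under the
identification `(H̃_A ⊗ H_A^aux) ⊗ (H̃_B ⊗ H_B^aux) ≅ (H̃_A ⊗ H̃_B) ⊗ (H_A^aux ⊗ H_B^aux)`). -/
def Dilates (S St : QModel X Y A B) : Prop :=
  ∃ (eA eB : ℕ) (aux : Fin eA × Fin eB → ℂ)
    (IA : Matrix (Fin St.dA × Fin eA) (Fin S.dA) ℂ)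
    (IB : Matrix (Fin St.dB × Fin eB) (Fin S.dB) ℂ),
    IAᴴ * IA = 1 ∧ IBᴴ * IB = 1 ∧ (∑ i, star (aux i) * aux i) = 1 ∧
    ∀ (x : X) (a : A) (y : Y) (b : B) (i : Fin St.dA) (k : Fin eA) (j : Fin St.dB) (l : Fin eB),
      ((IA ⊗ₖ IB).mulVec ((S.M x a ⊗ₖ S.N y b).mulVec S.ψ)) ((i, k), (j, l))
        = ((St.M x a ⊗ₖ St.N y b).mulVec St.ψ) (i, j) * aux (k, l)

/-- `p` is a self-test for the class `C`: some ideal model in `C` realizes `p` and is a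
local dilation of every model for `p` in `C`. -/
def SelfTestFor (C : Set (QModel X Y A B)) (p : A → B → X → Y → ℝ) : Prop :=
  ∃ St ∈ C, Realizes St p ∧ ∀ S ∈ C, Realizes S p → Dilates S St

/-- Word value `⟨ψ| M^{x₁}_{a₁} ⋯ M^{x_k}_{a_k} ⊗ N^{y₁}_{b₁} ⋯ N^{y_ℓ}_{b_ℓ} |ψ⟩`. -/
def wordValue (S : QModel X Y A B) (wA : List (X × A)) (wB : List (Y × B)) : ℂ :=
  qInner S.ψ ((((wA.map fun q => S.M q.1 q.2).prod) ⊗ₖ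
    ((wB.map fun q => S.N q.1 q.2).prod)).mulVec S.ψ)

/-- `S` and `S'` define the same abstract state: all their word values coincide. -/
def SameState (S S' : QModel X Y A B) : Prop :=
  ∀ wA wB, wordValue S wA wB = wordValue S' wA wB

/-- Reduced density matrix of `ψ` on the first tensor factor. -/
def redA {m n : ℕ} (ψ : Fin m × Fin n → ℂ) : Matrix (Fin m) (Fin m) ℂ :=
  Matrix.of fun i i' => ∑ j, ψ (i, j) * star (ψ (i', j))

/-- Reduced density matrix of `ψ` on the second tensor factor. -/
def redB {m n : ℕ} (ψ : Fin m × Fin n → ℂ) : Matrix (Fin n) (Fin n) ℂ :=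
  Matrix.of fun j j' => ∑ i, ψ (i, j) * star (ψ (i, j'))

/-- `P` is the orthogonal projection onto the range (support) of the positive
semidefinite matrix `ρ`. -/
def IsSupportProjection {n : Type} [Fintype n] [DecidableEq n] (ρ P : Matrix n n ℂ) : Prop :=
  P.IsHermitian ∧ P * P = P ∧ P * ρ = ρ ∧ ∀ v, ρ.mulVec v = 0 → P.mulVec v = 0

/-- `S` is centrally supported: the support projections of `ψ` commute with all
measurement operators. -/
def CentrallySupported (S : QModel X Y A B) : Prop :=
  ∃ PA PB, IsSupportProjection (redA S.ψ) PA ∧ IsSupportProjection (redB S.ψ) PB ∧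
    (∀ x a, PA * S.M x a = S.M x a * PA) ∧ (∀ y b, PB * S.N y b = S.N y b * PB)

/-- `S` is full-rank: both support projections of `ψ` are the identity, i.e. the reduced
density matrices have trivial kernel. -/
def FullRank (S : QModel X Y A B) : Prop :=
  (∀ v, (redA S.ψ).mulVec v = 0 → v = 0) ∧ (∀ v, (redB S.ψ).mulVec v = 0 → v = 0)

/-- `S` is projective: all measurement operators are self-adjoint projections. -/
def Projective (S : QModel X Y A B) : Prop :=
  (∀ x a, (S.M x a).IsHermitian ∧ S.M x a * S.M x a = S.M x a) ∧
  (∀ y b, (S.N y b).IsHermitian ∧ S.N y b * S.N y b = S.N y b)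

/-- `St` is locally equivalent to a submodel of `S`, expressed via local isometries
`VA`, `VB` whose range projections `VA * VAᴴ`, `VB * VBᴴ` commute with the measurements. -/
def EquivToSubmodel (S St : QModel X Y A B) : Prop :=
  ∃ (VA : Matrix (Fin S.dA) (Fin St.dA) ℂ) (VB : Matrix (Fin S.dB) (Fin St.dB) ℂ) (lam : ℂ),
    lam ≠ 0 ∧ VAᴴ * VA = 1 ∧ VBᴴ * VB = 1 ∧
    (∀ x a, (VA * VAᴴ) * S.M x a = S.M x a * (VA * VAᴴ)) ∧
    (∀ y b, (VB * VBᴴ) * S.N y b = S.N y b * (VB * VBᴴ)) ∧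
    (∀ x a, St.M x a = VAᴴ * S.M x a * VA) ∧
    (∀ y b, St.N y b = VBᴴ * S.N y b * VB) ∧
    (VAᴴ ⊗ₖ VBᴴ).mulVec S.ψ = lam • St.ψ

/-- A class of models is closed if it is closed under passing to models locally
equivalent to submodels. -/
def ClosedClass (C : Set (QModel X Y A B)) : Prop :=
  ∀ S ∈ C, ∀ St, EquivToSubmodel S St → St ∈ C

/-- `p` is an abstract state self-test for `C`: `C` contains a model for `p`, and any two
models for `p` in `C` define the same abstract state. -/
def AbstractSelfTestFor (C : Set (QModel X Y A B)) (p : A → B → X → Y → ℝ) : Prop :=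
  (∃ S ∈ C, Realizes S p) ∧
  ∀ S ∈ C, ∀ S' ∈ C, Realizes S p → Realizes S' p → SameState S S'

/-- `Sp` is the support model of `S`, presented via isometries `VA`, `VB` onto the
supports of `ψ` (so `VA * VAᴴ`, `VB * VBᴴ` are the support projections). -/
def IsSupportModel (S Sp : QModel X Y A B) : Prop :=
  ∃ (VA : Matrix (Fin S.dA) (Fin Sp.dA) ℂ) (VB : Matrix (Fin S.dB) (Fin Sp.dB) ℂ),
    VAᴴ * VA = 1 ∧ VBᴴ * VB = 1 ∧
    IsSupportProjection (redA S.ψ) (VA * VAᴴ) ∧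
    IsSupportProjection (redB S.ψ) (VB * VBᴴ) ∧
    (∀ x a, Sp.M x a = VAᴴ * S.M x a * VA) ∧
    (∀ y b, Sp.N y b = VBᴴ * S.N y b * VB) ∧
    (VAᴴ ⊗ₖ VBᴴ).mulVec S.ψ = Sp.ψ

/-- The associated representation of `S` is irreducible: every matrix commuting with all
`M^x_a ⊗ Id` and `Id ⊗ N^y_b` is a scalar multiple of the identity. -/
def IrreducibleModel (S : QModel X Y A B) : Prop :=
  ∀ T : Matrix (Fin S.dA × Fin S.dB) (Fin S.dA × Fin S.dB) ℂ,
    (∀ x a, T * (S.M x a ⊗ₖ (1 : Matrix (Fin S.dB) (Fin S.dB) ℂ))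
      = (S.M x a ⊗ₖ (1 : Matrix (Fin S.dB) (Fin S.dB) ℂ)) * T) →
    (∀ y b, T * ((1 : Matrix (Fin S.dA) (Fin S.dA) ℂ) ⊗ₖ S.N y b)
      = ((1 : Matrix (Fin S.dA) (Fin S.dA) ℂ) ⊗ₖ S.N y b) * T) →
    ∃ c : ℂ, T = c • (1 : Matrix (Fin S.dA × Fin S.dB) (Fin S.dA × Fin S.dB) ℂ)



/-! ### Auxiliary lemmas for statement6 -/

lemma ext_of_mulVec' {m n : Type} [Fintype m] [Fintype n] [DecidableEq n] {A B : Matrix m n ℂ}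
    (h : ∀ v, A.mulVec v = B.mulVec v) : A = B := by
  ext i j
  simpa [Matrix.mulVec_single] using congrFun (h (Pi.single j 1)) i

lemma supp_unique' {m : Type} [Fintype m] [DecidableEq m] {ρ P Q : Matrix m m ℂ}
    (hρ : ρ.IsHermitian)
    (hP : IsSupportProjection ρ P) (hQ : IsSupportProjection ρ Q) : P = Q := by
  obtain ⟨hPh, hPP, hPρ, hPker⟩ := hP
  obtain ⟨hQh, hQP, hQρ, hQker⟩ := hQ
  have hρQ : ρ * Q = ρ := by
    have h1 : (Q * ρ)ᴴ = ρᴴ := by rw [hQρ]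
    rwa [Matrix.conjTranspose_mul, hQh.eq, hρ.eq] at h1
  have hρP : ρ * P = ρ := by
    have h1 : (P * ρ)ᴴ = ρᴴ := by rw [hPρ]
    rwa [Matrix.conjTranspose_mul, hPh.eq, hρ.eq] at h1
  have key : ∀ (P' Q' : Matrix m m ℂ), ρ * Q' = ρ →
      (∀ v, ρ.mulVec v = 0 → P'.mulVec v = 0) → P' * Q' = P' := by
    intro P' Q' h1 h2
    apply ext_of_mulVec'
    intro v
    have hz : ρ.mulVec (Q'.mulVec v - v) = 0 := by
      rw [Matrix.mulVec_sub, Matrix.mulVec_mulVec, h1, sub_self]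
    have h3 := h2 _ hz
    rw [Matrix.mulVec_sub, sub_eq_zero, Matrix.mulVec_mulVec] at h3
    rw [h3]
  have h4 : Q * P = P := by
    have h5 := congrArg Matrix.conjTranspose (key P Q hρQ hPker)
    rwa [Matrix.conjTranspose_mul, hPh.eq, hQh.eq] at h5
  rw [← h4, key Q P hρP hQker]

lemma supp_mul' {m k : Type} [Fintype m] [Fintype k] [DecidableEq m]
    (Ψ : Matrix m k ℂ) {P : Matrix m m ℂ}
    (hP : IsSupportProjection (Ψ * Ψᴴ) P) : P * Ψ = Ψ := by
  obtain ⟨hPh, hPP, hPρ, -⟩ := hP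
  have h1 : (1 - P) * (Ψ * Ψᴴ) = 0 := by
    rw [Matrix.sub_mul, Matrix.one_mul, hPρ, sub_self]
  have h2 : ((1 - P) * Ψ) * ((1 - P) * Ψ)ᴴ = 0 := by
    rw [Matrix.conjTranspose_mul]
    calc (1 - P) * Ψ * (Ψᴴ * (1 - P)ᴴ) = ((1 - P) * (Ψ * Ψᴴ)) * (1 - P)ᴴ := by
          simp only [Matrix.mul_assoc]
      _ = 0 := by rw [h1, Matrix.zero_mul]
  have h3 := Matrix.self_mul_conjTranspose_eq_zero.mp h2
  rw [Matrix.sub_mul, Matrix.one_mul, sub_eq_zero] at h3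
  exact h3.symm

lemma kron_mulVec_apply {m n m' n' : Type} [Fintype m'] [Fintype n']
    (A : Matrix m m' ℂ) (B : Matrix n n' ℂ) (v : m' × n' → ℂ) (i : m) (j : n) :
    ((A ⊗ₖ B).mulVec v) (i, j) = ∑ i', ∑ j', A i i' * B j j' * v (i', j') := by
  simp [Matrix.mulVec, dotProduct, Fintype.sum_prod_type, Matrix.kroneckerMap_apply]

lemma kron_one_mulVec_apply {m n : Type} [Fintype m] [Fintype n] [DecidableEq n]
    (P : Matrix m m ℂ) (v : m × n → ℂ) (i : m) (j : n) :
    ((P ⊗ₖ (1 : Matrix n n ℂ)).mulVec v) (i, j) = ∑ i', P i i' * v (i', j) := by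
  rw [kron_mulVec_apply]
  apply Finset.sum_congr rfl
  intro i' _
  simp [Matrix.one_apply, mul_ite, ite_mul, Finset.sum_ite_eq]

lemma one_kron_mulVec_apply {m n : Type} [Fintype m] [Fintype n] [DecidableEq m]
    (P : Matrix n n ℂ) (v : m × n → ℂ) (i : m) (j : n) :
    (((1 : Matrix m m ℂ) ⊗ₖ P).mulVec v) (i, j) = ∑ j', P j j' * v (i, j') := by
  rw [kron_mulVec_apply]
  simp [Matrix.one_apply, ite_mul, Finset.sum_ite_eq]

lemma kron_proj_id {dA dB : ℕ} (PA : Matrix (Fin dA) (Fin dA) ℂ) (PB : Matrix (Fin dB) (Fin dB) ℂ)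
    (ψ : Fin dA × Fin dB → ℂ)
    (h1 : (PA ⊗ₖ (1 : Matrix (Fin dB) (Fin dB) ℂ)).mulVec ψ = ψ)
    (h2 : ((1 : Matrix (Fin dA) (Fin dA) ℂ) ⊗ₖ PB).mulVec ψ = ψ) :
    (PA ⊗ₖ PB).mulVec ψ = ψ := by
  have e : PA ⊗ₖ PB = (PA ⊗ₖ (1 : Matrix (Fin dB) (Fin dB) ℂ)) *
      ((1 : Matrix (Fin dA) (Fin dA) ℂ) ⊗ₖ PB) := by
    rw [← Matrix.mul_kronecker_mul, Matrix.mul_one, Matrix.one_mul]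
  rw [e, ← Matrix.mulVec_mulVec, h2, h1]

lemma proj_comm_id_left {dA dB : ℕ} {PA M : Matrix (Fin dA) (Fin dA) ℂ}
    {N : Matrix (Fin dB) (Fin dB) ℂ} {ψ : Fin dA × Fin dB → ℂ}
    (hcomm : PA * M = M * PA)
    (h1 : (PA ⊗ₖ (1 : Matrix (Fin dB) (Fin dB) ℂ)).mulVec ψ = ψ) :
    (PA ⊗ₖ (1 : Matrix (Fin dB) (Fin dB) ℂ)).mulVec ((M ⊗ₖ N).mulVec ψ)
      = (M ⊗ₖ N).mulVec ψ := by
  have e : (PA ⊗ₖ (1 : Matrix (Fin dB) (Fin dB) ℂ)) * (M ⊗ₖ N)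
      = (M ⊗ₖ N) * (PA ⊗ₖ (1 : Matrix (Fin dB) (Fin dB) ℂ)) := by
    rw [← Matrix.mul_kronecker_mul, ← Matrix.mul_kronecker_mul, hcomm,
      Matrix.one_mul, Matrix.mul_one]
  rw [Matrix.mulVec_mulVec, e, ← Matrix.mulVec_mulVec, h1]

lemma proj_comm_id_right {dA dB : ℕ} {PB N : Matrix (Fin dB) (Fin dB) ℂ}
    {M : Matrix (Fin dA) (Fin dA) ℂ} {ψ : Fin dA × Fin dB → ℂ}
    (hcomm : PB * N = N * PB)
    (h2 : ((1 : Matrix (Fin dA) (Fin dA) ℂ) ⊗ₖ PB).mulVec ψ = ψ) :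
    (((1 : Matrix (Fin dA) (Fin dA) ℂ)) ⊗ₖ PB).mulVec ((M ⊗ₖ N).mulVec ψ)
      = (M ⊗ₖ N).mulVec ψ := by
  have e : ((1 : Matrix (Fin dA) (Fin dA) ℂ) ⊗ₖ PB) * (M ⊗ₖ N)
      = (M ⊗ₖ N) * ((1 : Matrix (Fin dA) (Fin dA) ℂ) ⊗ₖ PB) := by
    rw [← Matrix.mul_kronecker_mul, ← Matrix.mul_kronecker_mul, hcomm,
      Matrix.one_mul, Matrix.mul_one]
  rw [Matrix.mulVec_mulVec, e, ← Matrix.mulVec_mulVec, h2]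

lemma claim1' {dA dB dA' dB' : ℕ} (M : Matrix (Fin dA) (Fin dA) ℂ) (N : Matrix (Fin dB) (Fin dB) ℂ)
    (VA : Matrix (Fin dA) (Fin dA') ℂ) (VB : Matrix (Fin dB) (Fin dB') ℂ)
    (ψ : Fin dA × Fin dB → ℂ)
    (hkP : ((VA * VAᴴ) ⊗ₖ (VB * VBᴴ)).mulVec ψ = ψ) :
    ((VAᴴ * M * VA) ⊗ₖ (VBᴴ * N * VB)).mulVec ((VAᴴ ⊗ₖ VBᴴ).mulVec ψ)
      = (VAᴴ ⊗ₖ VBᴴ).mulVec ((M ⊗ₖ N).mulVec ψ) := by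
  rw [Matrix.mulVec_mulVec, ← Matrix.mul_kronecker_mul]
  rw [Matrix.mulVec_mulVec, ← Matrix.mul_kronecker_mul]
  have e1 : VAᴴ * M * VA * VAᴴ = (VAᴴ * M) * (VA * VAᴴ) := by
    simp only [Matrix.mul_assoc]
  have e2 : VBᴴ * N * VB * VBᴴ = (VBᴴ * N) * (VB * VBᴴ) := by
    simp only [Matrix.mul_assoc]
  rw [e1, e2, Matrix.mul_kronecker_mul, ← Matrix.mulVec_mulVec, hkP]

def dilIso {d d' : ℕ} (V : Matrix (Fin d) (Fin d') ℂ) (i0 : Fin d') :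
    Matrix (Fin d' × Fin (d + 1)) (Fin d) ℂ :=
  Matrix.of fun p i' =>
    if h : p.2 = 0 then Vᴴ p.1 i'
    else if p.1 = i0 then (1 - V * Vᴴ : Matrix (Fin d) (Fin d) ℂ) (p.2.pred h) i' else 0

lemma dilIso_apply_zero {d d' : ℕ} (V : Matrix (Fin d) (Fin d') ℂ) (i0 q : Fin d') (c : Fin d) :
    dilIso V i0 (q, 0) c = Vᴴ q c := by
  simp [dilIso]

lemma dilIso_apply_succ {d d' : ℕ} (V : Matrix (Fin d) (Fin d') ℂ) (i0 q : Fin d')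
    (k : Fin d) (c : Fin d) :
    dilIso V i0 (q, k.succ) c
      = if q = i0 then (1 - V * Vᴴ : Matrix (Fin d) (Fin d) ℂ) k c else 0 := by
  have h0 : dilIso V i0 (q, k.succ) c = if h : k.succ = 0 then Vᴴ q c
      else if q = i0 then (1 - V * Vᴴ : Matrix (Fin d) (Fin d) ℂ) (k.succ.pred h) c else 0 := rfl
  rw [h0, dif_neg (Fin.succ_ne_zero k)]
  simp [Fin.pred_succ]

lemma dilIso_isometry {d d' : ℕ} (V : Matrix (Fin d) (Fin d') ℂ) (i0 : Fin d')
    (hherm : (V * Vᴴ).IsHermitian) (hproj : (V * Vᴴ) * (V * Vᴴ) = V * Vᴴ) :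
    (dilIso V i0)ᴴ * dilIso V i0 = 1 := by
  have hQh : ∀ k c, star ((1 - V * Vᴴ : Matrix (Fin d) (Fin d) ℂ) k c)
      = (1 - V * Vᴴ : Matrix (Fin d) (Fin d) ℂ) c k := by
    intro k c
    have h1 : ((V * Vᴴ)ᴴ) c k = star ((V * Vᴴ) k c) := rfl
    simp only [Matrix.sub_apply, star_sub]
    rw [← h1, hherm.eq]
    by_cases hkc : k = c <;> simp [hkc, Matrix.one_apply, eq_comm]
  have hQQ : (1 - V * Vᴴ : Matrix (Fin d) (Fin d) ℂ) * (1 - V * Vᴴ) = 1 - V * Vᴴ := by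
    rw [Matrix.mul_sub, Matrix.mul_one, Matrix.sub_mul, Matrix.one_mul, hproj]
    abel
  ext c e
  rw [Matrix.mul_apply, Fintype.sum_prod_type]
  have step : ∀ q : Fin d',
      (∑ k : Fin (d + 1), (dilIso V i0)ᴴ c (q, k) * dilIso V i0 (q, k) e)
      = star (Vᴴ q c) * Vᴴ q e
        + (if q = i0 then
            ∑ k : Fin d, (1 - V * Vᴴ : Matrix (Fin d) (Fin d) ℂ) c k
              * (1 - V * Vᴴ : Matrix (Fin d) (Fin d) ℂ) k e
          else 0) := by
    intro q
    rw [Fin.sum_univ_succ]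
    simp only [Matrix.conjTranspose_apply, dilIso_apply_zero, dilIso_apply_succ]
    congr 1
    by_cases hq : q = i0
    · subst hq
      simp only [eq_self_iff_true, if_true]
      exact Finset.sum_congr rfl (fun k _ => by rw [hQh])
    · simp [hq]
  rw [Finset.sum_congr rfl (fun q _ => step q), Finset.sum_add_distrib]
  have t1 : (∑ q : Fin d', star (Vᴴ q c) * Vᴴ q e) = (V * Vᴴ) c e := by
    simp [Matrix.mul_apply, Matrix.conjTranspose_apply, mul_comm]
  have t2 : (∑ q : Fin d', (if q = i0 then
      ∑ k : Fin d, (1 - V * Vᴴ : Matrix (Fin d) (Fin d) ℂ) c k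
        * (1 - V * Vᴴ : Matrix (Fin d) (Fin d) ℂ) k e else 0))
      = (1 - V * Vᴴ : Matrix (Fin d) (Fin d) ℂ) c e := by
    rw [Finset.sum_ite_eq' Finset.univ i0]
    simp only [Finset.mem_univ, if_pos]
    rw [← Matrix.mul_apply, hQQ]
  rw [t1, t2, Matrix.sub_apply]
  ring

lemma double_sum_zero_left {dA dB : ℕ} (f : Fin dA → ℂ) (g : Fin dB → ℂ)
    (φ : Fin dA × Fin dB → ℂ)
    (h : ∀ j', (∑ i', f i' * φ (i', j')) = 0) :
    (∑ i', ∑ j', f i' * g j' * φ (i', j')) = 0 := by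
  rw [Finset.sum_comm]
  apply Finset.sum_eq_zero
  intro j' _
  calc (∑ i', f i' * g j' * φ (i', j')) = g j' * ∑ i', f i' * φ (i', j') := by
        rw [Finset.mul_sum]
        exact Finset.sum_congr rfl (fun i' _ => by ring)
    _ = 0 := by rw [h, mul_zero]

lemma double_sum_zero_right {dA dB : ℕ} (f : Fin dA → ℂ) (g : Fin dB → ℂ)
    (φ : Fin dA × Fin dB → ℂ)
    (h : ∀ i', (∑ j', g j' * φ (i', j')) = 0) :
    (∑ i', ∑ j', f i' * g j' * φ (i', j')) = 0 := by
  apply Finset.sum_eq_zero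
  intro i' _
  calc (∑ j', f i' * g j' * φ (i', j')) = f i' * ∑ j', g j' * φ (i', j') := by
        rw [Finset.mul_sum]
        exact Finset.sum_congr rfl (fun j' _ => by ring)
    _ = 0 := by rw [h, mul_zero]


/-- If `S` is centrally supported with support model `S'`, then `S' ⪰ S`
and `S ⪰ S'`. -/
theorem statement6 {X Y A B : Type} [Fintype A] [Fintype B]
    (S Sp : QModel X Y A B)
    (hcs : CentrallySupported S)
    (hsm : IsSupportModel S Sp) :
    Dilates Sp S ∧ Dilates S Sp := by
  obtain ⟨PA', PB', hPA', hPB', hMA', hNB'⟩ := hcs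
  obtain ⟨VA, VB, hVA, hVB, hPA, hPB, hMdef, hNdef, hψ⟩ := hsm
  set ΨA : Matrix (Fin S.dA) (Fin S.dB) ℂ := Matrix.of (fun i j => S.ψ (i, j)) with hΨA
  set ΨB : Matrix (Fin S.dB) (Fin S.dA) ℂ := Matrix.of (fun j i => S.ψ (i, j)) with hΨB
  have hredA : redA S.ψ = ΨA * ΨAᴴ := by
    ext i i'
    simp [redA, Matrix.mul_apply, Matrix.conjTranspose_apply, hΨA]
  have hredB : redB S.ψ = ΨB * ΨBᴴ := by
    ext j j'
    simp [redB, Matrix.mul_apply, Matrix.conjTranspose_apply, hΨB]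
  have hPA2 : IsSupportProjection (ΨA * ΨAᴴ) (VA * VAᴴ) := hredA ▸ hPA
  have hPB2 : IsSupportProjection (ΨB * ΨBᴴ) (VB * VBᴴ) := hredB ▸ hPB
  have hAmul : (VA * VAᴴ) * ΨA = ΨA := supp_mul' ΨA hPA2
  have hBmul : (VB * VBᴴ) * ΨB = ΨB := supp_mul' ΨB hPB2
  have hPAψ : ∀ i j, (∑ i', (VA * VAᴴ) i i' * S.ψ (i', j)) = S.ψ (i, j) := by
    intro i j
    have h := congrFun (congrFun hAmul i) j
    simpa [Matrix.mul_apply, hΨA] using h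
  have hPBψ : ∀ i j, (∑ j', (VB * VBᴴ) j j' * S.ψ (i, j')) = S.ψ (i, j) := by
    intro i j
    have h := congrFun (congrFun hBmul j) i
    simpa [Matrix.mul_apply, hΨB] using h
  have hkA : ((VA * VAᴴ) ⊗ₖ (1 : Matrix (Fin S.dB) (Fin S.dB) ℂ)).mulVec S.ψ = S.ψ := by
    funext p
    rcases p with ⟨i, j⟩
    rw [kron_one_mulVec_apply]
    exact hPAψ i j
  have hkB : ((1 : Matrix (Fin S.dA) (Fin S.dA) ℂ) ⊗ₖ (VB * VBᴴ)).mulVec S.ψ = S.ψ := by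
    funext p
    rcases p with ⟨i, j⟩
    rw [one_kron_mulVec_apply]
    exact hPBψ i j
  have hkAB := kron_proj_id _ _ _ hkA hkB
  have hHA : (redA S.ψ).IsHermitian := by
    rw [hredA]; exact Matrix.isHermitian_mul_conjTranspose_self ΨA
  have hHB : (redB S.ψ).IsHermitian := by
    rw [hredB]; exact Matrix.isHermitian_mul_conjTranspose_self ΨB
  have hAeq : VA * VAᴴ = PA' := supp_unique' hHA hPA hPA'
  have hBeq : VB * VBᴴ = PB' := supp_unique' hHB hPB hPB'
  have hMA : ∀ x a, (VA * VAᴴ) * S.M x a = S.M x a * (VA * VAᴴ) := by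
    rw [hAeq]; exact hMA'
  have hNB : ∀ y b, (VB * VBᴴ) * S.N y b = S.N y b * (VB * VBᴴ) := by
    rw [hBeq]; exact hNB'
  have hclaim1 : ∀ (x : X) (a : A) (y : Y) (b : B),
      (Sp.M x a ⊗ₖ Sp.N y b).mulVec Sp.ψ
        = (VAᴴ ⊗ₖ VBᴴ).mulVec ((S.M x a ⊗ₖ S.N y b).mulVec S.ψ) := by
    intro x a y b
    rw [hMdef, hNdef, ← hψ]
    exact claim1' _ _ _ _ _ hkAB
  have hclaim2 : ∀ (x : X) (a : A) (y : Y) (b : B),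
      (VA ⊗ₖ VB).mulVec ((Sp.M x a ⊗ₖ Sp.N y b).mulVec Sp.ψ)
        = (S.M x a ⊗ₖ S.N y b).mulVec S.ψ := by
    intro x a y b
    rw [hclaim1 x a y b, Matrix.mulVec_mulVec, ← Matrix.mul_kronecker_mul]
    exact kron_proj_id _ _ _ (proj_comm_id_left (hMA x a) hkA)
      (proj_comm_id_right (hNB y b) hkB)
  constructor
  · -- Sp ⪰ S
    refine ⟨1, 1, fun _ => 1,
      Matrix.of (fun p j => VA p.1 j), Matrix.of (fun p j => VB p.1 j), ?_, ?_, ?_, ?_⟩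
    · ext c d
      have h : (VAᴴ * VA) c d = (1 : Matrix (Fin Sp.dA) (Fin Sp.dA) ℂ) c d := by rw [hVA]
      rw [Matrix.mul_apply] at h
      simp only [Matrix.conjTranspose_apply] at h
      rw [Matrix.mul_apply, Fintype.sum_prod_type]
      simpa [Matrix.conjTranspose_apply, Fin.sum_univ_one] using h
    · ext c d
      have h : (VBᴴ * VB) c d = (1 : Matrix (Fin Sp.dB) (Fin Sp.dB) ℂ) c d := by rw [hVB]
      rw [Matrix.mul_apply] at h
      simp only [Matrix.conjTranspose_apply] at h
      rw [Matrix.mul_apply, Fintype.sum_prod_type]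
      simpa [Matrix.conjTranspose_apply, Fin.sum_univ_one] using h
    · simp
    · intro x a y b i k j l
      have h2 : ((VA ⊗ₖ VB).mulVec ((Sp.M x a ⊗ₖ Sp.N y b).mulVec Sp.ψ)) (i, j)
          = ((S.M x a ⊗ₖ S.N y b).mulVec S.ψ) (i, j) := by rw [hclaim2 x a y b]
      rw [kron_mulVec_apply] at h2
      rw [kron_mulVec_apply, mul_one]
      simpa [Matrix.of_apply] using h2
  · -- S ⪰ Sp
    have hne : Nonempty (Fin Sp.dA × Fin Sp.dB) := by
      by_contra h
      rw [not_nonempty_iff] at h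
      have h1 := Sp.ψ_unit
      rw [Finset.univ_eq_empty, Finset.sum_empty] at h1
      exact zero_ne_one h1
    obtain ⟨⟨i0, j0⟩⟩ := hne
    have hzA : ∀ (x : X) (a : A) (y : Y) (b : B) (c : Fin S.dA) (j' : Fin S.dB),
        (∑ i', (1 - VA * VAᴴ : Matrix (Fin S.dA) (Fin S.dA) ℂ) c i'
          * ((S.M x a ⊗ₖ S.N y b).mulVec S.ψ) (i', j')) = 0 := by
      intro x a y b c j'
      have hA := proj_comm_id_left (hMA x a) hkA (N := S.N y b)
      have h1 : (∑ i', (VA * VAᴴ) c i' * ((S.M x a ⊗ₖ S.N y b).mulVec S.ψ) (i', j'))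
          = ((S.M x a ⊗ₖ S.N y b).mulVec S.ψ) (c, j') := by
        have h := congrFun hA (c, j')
        rwa [kron_one_mulVec_apply] at h
      have hone : (∑ i', (1 : Matrix (Fin S.dA) (Fin S.dA) ℂ) c i'
          * ((S.M x a ⊗ₖ S.N y b).mulVec S.ψ) (i', j'))
          = ((S.M x a ⊗ₖ S.N y b).mulVec S.ψ) (c, j') := by
        simp [Matrix.one_apply, ite_mul, Finset.sum_ite_eq]
      calc (∑ i', (1 - VA * VAᴴ : Matrix (Fin S.dA) (Fin S.dA) ℂ) c i'
              * ((S.M x a ⊗ₖ S.N y b).mulVec S.ψ) (i', j'))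
          = (∑ i', ((1 : Matrix (Fin S.dA) (Fin S.dA) ℂ) c i'
              * ((S.M x a ⊗ₖ S.N y b).mulVec S.ψ) (i', j')
            - (VA * VAᴴ) c i' * ((S.M x a ⊗ₖ S.N y b).mulVec S.ψ) (i', j'))) := by
            apply Finset.sum_congr rfl
            intro i' _
            rw [Matrix.sub_apply, sub_mul]
        _ = 0 := by rw [Finset.sum_sub_distrib, h1, hone, sub_self]
    have hzB : ∀ (x : X) (a : A) (y : Y) (b : B) (c : Fin S.dB) (i' : Fin S.dA),
        (∑ j', (1 - VB * VBᴴ : Matrix (Fin S.dB) (Fin S.dB) ℂ) c j'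
          * ((S.M x a ⊗ₖ S.N y b).mulVec S.ψ) (i', j')) = 0 := by
      intro x a y b c i'
      have hB := proj_comm_id_right (hNB y b) hkB (M := S.M x a)
      have h1 : (∑ j', (VB * VBᴴ) c j' * ((S.M x a ⊗ₖ S.N y b).mulVec S.ψ) (i', j'))
          = ((S.M x a ⊗ₖ S.N y b).mulVec S.ψ) (i', c) := by
        have h := congrFun hB (i', c)
        rwa [one_kron_mulVec_apply] at h
      have hone : (∑ j', (1 : Matrix (Fin S.dB) (Fin S.dB) ℂ) c j'
          * ((S.M x a ⊗ₖ S.N y b).mulVec S.ψ) (i', j'))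
          = ((S.M x a ⊗ₖ S.N y b).mulVec S.ψ) (i', c) := by
        simp [Matrix.one_apply, ite_mul, Finset.sum_ite_eq]
      calc (∑ j', (1 - VB * VBᴴ : Matrix (Fin S.dB) (Fin S.dB) ℂ) c j'
              * ((S.M x a ⊗ₖ S.N y b).mulVec S.ψ) (i', j'))
          = (∑ j', ((1 : Matrix (Fin S.dB) (Fin S.dB) ℂ) c j'
              * ((S.M x a ⊗ₖ S.N y b).mulVec S.ψ) (i', j')
            - (VB * VBᴴ) c j' * ((S.M x a ⊗ₖ S.N y b).mulVec S.ψ) (i', j'))) := by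
            apply Finset.sum_congr rfl
            intro j' _
            rw [Matrix.sub_apply, sub_mul]
        _ = 0 := by rw [Finset.sum_sub_distrib, h1, hone, sub_self]
    refine ⟨S.dA + 1, S.dB + 1,
      (fun p => if p.1 = 0 ∧ p.2 = 0 then 1 else 0),
      dilIso VA i0, dilIso VB j0,
      dilIso_isometry VA i0 hPA.1 hPA.2.1, dilIso_isometry VB j0 hPB.1 hPB.2.1, ?_, ?_⟩
    · have e : ∀ p : Fin (S.dA + 1) × Fin (S.dB + 1),
          star (if p.1 = 0 ∧ p.2 = 0 then (1 : ℂ) else 0)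
            * (if p.1 = 0 ∧ p.2 = 0 then (1 : ℂ) else 0)
          = if p = ((0 : Fin (S.dA + 1)), (0 : Fin (S.dB + 1))) then 1 else 0 := by
        intro p
        by_cases h : p.1 = 0 ∧ p.2 = 0 <;> simp [h, Prod.ext_iff]
      rw [Finset.sum_congr rfl (fun p _ => e p), Finset.sum_ite_eq' Finset.univ]
      simp
    · intro x a y b i k j l
      rw [kron_mulVec_apply]
      rcases Fin.eq_zero_or_eq_succ k with hk | ⟨k', hk⟩
      · rcases Fin.eq_zero_or_eq_succ l with hl | ⟨l', hl⟩
        · subst hk; subst hl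
          simp only [dilIso_apply_zero]
          have h2 := congrFun (hclaim1 x a y b) (i, j)
          have h3 := kron_mulVec_apply VAᴴ VBᴴ ((S.M x a ⊗ₖ S.N y b).mulVec S.ψ) i j
          rw [h2, h3]
          simp
        · subst hk; subst hl
          simp only [Fin.succ_ne_zero, and_false, if_false, mul_zero]
          simp only [dilIso_apply_zero, dilIso_apply_succ]
          by_cases hj : j = j0
          · subst hj
            simp only [eq_self_iff_true, if_true]
            exact double_sum_zero_right _ _ _ (fun i' => hzB x a y b l' i')
          · simp [hj]
      · subst hk
        simp only [Fin.succ_ne_zero, false_and, if_false, mul_zero]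
        simp only [dilIso_apply_succ]
        by_cases hi : i = i0
        · subst hi
          simp only [eq_self_iff_true, if_true]
          exact double_sum_zero_left _ _ _ (fun j' => hzA x a y b k' j')
        · simp [hi]

end SelfTestPaper
end
end

section
/- Let H_A and H_B be finite-dimensional complex Hilbert spaces, let |ψ⟩ ∈ H_A ⊗ H_B be a unit vector, and let Π_A be the support projection of |ψ⟩ on H_A. If E ∈ B(H_A) is a self-adjoint operator and there exists an operator Ê ∈ B(H_B) such that (E ⊗ Id)|ψ⟩ = (Id ⊗ Ê)|ψ⟩, then Π_A commutes with E. -/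
open scoped Matrix Kronecker ComplexOrder

noncomputable section

namespace SelfTestPaper

variable {X Y A B : Type} [Fintype A] [Fintype B]

/-- If `E` is self-adjoint and `(E ⊗ Id)|ψ⟩ = (Id ⊗ Ê)|ψ⟩` for some `Ê`,
then the support projection of `ψ` on the first factor commutes with `E`. -/
theorem statement7 {m n : ℕ} (ψ : Fin m × Fin n → ℂ)
    (hψ : ∑ i, star (ψ i) * ψ i = 1)
    (PA : Matrix (Fin m) (Fin m) ℂ) (hPA : IsSupportProjection (redA ψ) PA)
    (E : Matrix (Fin m) (Fin m) ℂ) (hE : E.IsHermitian)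
    (Ehat : Matrix (Fin n) (Fin n) ℂ)
    (h : (E ⊗ₖ (1 : Matrix (Fin n) (Fin n) ℂ)).mulVec ψ
      = ((1 : Matrix (Fin m) (Fin m) ℂ) ⊗ₖ Ehat).mulVec ψ) :
    PA * E = E * PA := by
  obtain ⟨hPAh, hPA2, hPAρ, hker⟩ := hPA
  set ρ := redA ψ with hρdef
  have hρh : ρ.IsHermitian := by
    ext i i'
    simp only [Matrix.conjTranspose_apply, hρdef, redA, Matrix.of_apply, star_sum, star_mul',
      star_star]
    exact Finset.sum_congr rfl fun j _ => mul_comm _ _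
  have hEs : ∀ a b, star (E a b) = E b a := by
    intro a b
    have := congrFun (congrFun hE.eq b) a
    simpa [Matrix.conjTranspose_apply] using this
  -- pointwise form of the intertwining hypothesis
  have hK : ∀ i j, ∑ i', E i i' * ψ (i', j) = ∑ j', Ehat j j' * ψ (i, j') := by
    intro i j
    have h1 := congrFun h (i, j)
    simp only [Matrix.mulVec, dotProduct, Matrix.kroneckerMap_apply, Matrix.one_apply,
      Fintype.sum_prod_type, ite_mul, mul_ite, one_mul, zero_mul, mul_zero, mul_one,
      Finset.sum_ite_eq, Finset.sum_ite_eq', Finset.mem_univ, if_true] at h1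
    rw [Finset.sum_comm] at h1
    simpa using h1
  set c : Fin n → (Fin m → ℂ) → ℂ := fun j w => ∑ i, star (ψ (i, j)) * w i with hc
  have hmul : ∀ (w : Fin m → ℂ) i, ρ.mulVec w i = ∑ j, ψ (i, j) * c j w := by
    intro w i
    simp only [Matrix.mulVec, dotProduct, hρdef, redA, Matrix.of_apply, hc,
      Finset.sum_mul, Finset.mul_sum]
    rw [Finset.sum_comm]
    exact Finset.sum_congr rfl fun j _ => Finset.sum_congr rfl fun i' _ => by ring
  have hkerc : ∀ (w : Fin m → ℂ), ρ.mulVec w = 0 → ∀ j, c j w = 0 := by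
    intro w hw j
    have h0 : ∑ j, star (c j w) * c j w = 0 := by
      have hz : ∑ i, star (w i) * ρ.mulVec w i = 0 := by simp [hw]
      calc ∑ j, star (c j w) * c j w
          = ∑ j, ∑ i, ψ (i, j) * c j w * star (w i) := by
            refine Finset.sum_congr rfl fun j _ => ?_
            simp only [hc, star_sum, star_mul', star_star, Finset.sum_mul]
            exact Finset.sum_congr rfl fun i _ => by ring
        _ = ∑ i, star (w i) * ρ.mulVec w i := by
            rw [Finset.sum_comm]
            refine Finset.sum_congr rfl fun i _ => ?_
            rw [hmul, Finset.mul_sum]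
            exact Finset.sum_congr rfl fun j _ => by ring
        _ = 0 := hz
    have hreal : ∑ j, Complex.normSq (c j w) = 0 := by
      have hcast : ((∑ j, Complex.normSq (c j w) : ℝ) : ℂ) = 0 := by
        push_cast
        rw [← h0]
        refine Finset.sum_congr rfl fun j _ => ?_
        rw [Complex.normSq_eq_conj_mul_self]
        rfl
      exact_mod_cast hcast
    have := (Finset.sum_eq_zero_iff_of_nonneg
      (fun j _ => Complex.normSq_nonneg (c j w))).mp hreal j (Finset.mem_univ j)
    exact Complex.normSq_eq_zero.mp this
  -- E preserves the kernel of ρ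
  have hEker : ∀ (w : Fin m → ℂ), ρ.mulVec w = 0 → ρ.mulVec (E.mulVec w) = 0 := by
    intro w hw
    have hc0 := hkerc w hw
    have hcE : ∀ j, c j (E.mulVec w) = ∑ j', star (Ehat j j') * c j' w := by
      intro j
      calc c j (E.mulVec w)
          = ∑ k, ∑ i, star (ψ (i, j)) * (E i k * w k) := by
            simp only [hc, Matrix.mulVec, dotProduct, Finset.mul_sum]
            rw [Finset.sum_comm]
        _ = ∑ k, star (∑ j', Ehat j j' * ψ (k, j')) * w k := by
            refine Finset.sum_congr rfl fun k _ => ?_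
            rw [← hK k j]
            simp only [star_sum, star_mul', Finset.sum_mul]
            refine Finset.sum_congr rfl fun i _ => ?_
            rw [hEs k i]
            ring
        _ = ∑ j', star (Ehat j j') * c j' w := by
            simp only [hc, star_sum, star_mul', Finset.sum_mul, Finset.mul_sum]
            rw [Finset.sum_comm]
            exact Finset.sum_congr rfl fun k _ => Finset.sum_congr rfl fun j' _ => by ring
    funext i
    rw [hmul]
    simp [hcE, hc0]
  have hρPA : ρ * PA = ρ := by
    have := congrArg Matrix.conjTranspose hPAρ
    simpa [Matrix.conjTranspose_mul, hρh.eq, hPAh.eq] using this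
  -- PA * E * (1 - PA) = 0
  have hzero : PA * E * (1 - PA) = 0 := by
    have key : ∀ v, (PA * E * (1 - PA)).mulVec v = 0 := by
      intro v
      have h1 : ρ.mulVec ((1 - PA).mulVec v) = 0 := by
        rw [Matrix.mulVec_mulVec, Matrix.mul_sub, Matrix.mul_one, hρPA, sub_self,
          Matrix.zero_mulVec]
      have h2 := hker _ (hEker _ h1)
      rw [Matrix.mulVec_mulVec, Matrix.mulVec_mulVec] at h2
      rw [Matrix.mul_assoc, ← Matrix.mulVec_mulVec, ← Matrix.mulVec_mulVec]
      rw [Matrix.mulVec_mulVec, Matrix.mulVec_mulVec] 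
      exact h2
    ext i j
    have := congrFun (key (Pi.single j 1)) i
    simpa [Matrix.mulVec_single] using this
  have hPE : PA * E = PA * E * PA := by
    rw [Matrix.mul_sub, Matrix.mul_one, sub_eq_zero] at hzero
    exact hzero
  have hEP : E * PA = PA * E * PA := by
    have := congrArg Matrix.conjTranspose hPE
    simpa [Matrix.conjTranspose_mul, hE.eq, hPAh.eq, Matrix.mul_assoc] using this
  rw [hPE, hEP]

end SelfTestPaper
end
end

section
/- A quantum model S = (H_A, H_B, {M^x_a}, {N^y_b}, |ψ⟩) is centrally supported if and only if for every a ∈ A and x ∈ X there exists an operator M̂^x_a ∈ B(H_B) with (M^x_a ⊗ Id)|ψ⟩ = (Id ⊗ M̂^x_a)|ψ⟩, and for every b ∈ B and y ∈ Y there exists an operator N̂^y_b ∈ B(H_A) with (Id ⊗ N^y_b)|ψ⟩ = (N̂^y_b ⊗ Id)|ψ⟩. -/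
open scoped Matrix Kronecker ComplexOrder

noncomputable section

/-!
Write `Ψ` for the coefficient matrix of `ψ`, so that `(M ⊗ 1)ψ = (1 ⊗ M̂)ψ` reads `M Ψ = Ψ M̂ᵀ`:
an operator of Alice can be moved to Bob's side exactly when it leaves the column space of `Ψ`
invariant. That column space is the range of `ρ_A = Ψ Ψᴴ`, the support of `ψ` on Alice's side,
and a Hermitian operator leaves a subspace invariant iff it commutes with the orthogonal
projection onto it. Bob's side is the same argument for `Ψᵀ`.
-/

namespace Matrix

variable {𝕜 m n : Type*} [RCLike 𝕜] [Fintype m] [Fintype n] [DecidableEq m]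

theorem mul_eq_of_mul_self_mul_conjTranspose {A : Matrix m n 𝕜} {B : Matrix m m 𝕜}
    (h : B * (A * Aᴴ) = A * Aᴴ) : B * A = A := by
  have h' : (B - 1) * (A * Aᴴ) = 0 := by rw [Matrix.sub_mul, h, Matrix.one_mul, sub_self]
  rwa [mul_self_mul_conjTranspose_eq_zero, Matrix.sub_mul, Matrix.one_mul, sub_eq_zero] at h'

/-- `G = Aᴴ (A Aᴴ)⁺`, where `(A Aᴴ)⁺` applies `x ↦ x⁻¹` (with `0⁻¹ = 0`) to `A Aᴴ` by functional
calculus; `A * G` is the orthogonal projection onto the column space of `A`. -/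
theorem exists_isHermitian_mul_mul_self_eq (A : Matrix m n 𝕜) :
    ∃ G : Matrix n m 𝕜, (A * G).IsHermitian ∧ A * G * A = A := by
  have hρ : IsSelfAdjoint (A * Aᴴ) := isHermitian_mul_conjTranspose_self A
  have hcont (f : ℝ → ℝ) : ContinuousOn f (spectrum ℝ (A * Aᴴ)) :=
    (A * Aᴴ).finite_real_spectrum.continuousOn f
  have hρR : A * Aᴴ * cfc (·⁻¹ : ℝ → ℝ) (A * Aᴴ) = cfc (fun x : ℝ => x * x⁻¹) (A * Aᴴ) := by
    rw [cfc_mul _ _ _ (hcont _) (hcont _), cfc_id' ℝ _ hρ]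
  refine ⟨Aᴴ * cfc (·⁻¹ : ℝ → ℝ) (A * Aᴴ), ?_, mul_eq_of_mul_self_mul_conjTranspose ?_⟩
  · rw [← Matrix.mul_assoc, hρR]
    exact cfc_predicate _ _
  · rw [← Matrix.mul_assoc A Aᴴ, hρR]
    calc cfc (fun x : ℝ => x * x⁻¹) (A * Aᴴ) * (A * Aᴴ)
        = cfc (fun x : ℝ => x * x⁻¹ * x) (A * Aᴴ) := by
          rw [cfc_mul (fun x : ℝ => x * x⁻¹) (fun x => x) _ (hcont _) (hcont _), cfc_id' ℝ _ hρ]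
      _ = cfc (fun x : ℝ => x) (A * Aᴴ) :=
          cfc_congr fun x _ => by by_cases hx : x = 0 <;> simp [hx]
      _ = A * Aᴴ := cfc_id' ℝ _ hρ

end Matrix

namespace SelfTestPaper

open Matrix

section SupportProjection

variable {m n : Type} [Fintype m] [Fintype n]
  {Ψ : Matrix m n ℂ} {G : Matrix n m ℂ} {P M : Matrix m m ℂ}

theorem commute_mul_of_mul_eq_mul (hG : (Ψ * G).IsHermitian) (hGΨ : Ψ * G * Ψ = Ψ)
    (hM : M.IsHermitian) {W : Matrix n n ℂ} (hMW : M * Ψ = Ψ * W) :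
    Ψ * G * M = M * (Ψ * G) := by
  have hinv : M * (Ψ * G) = Ψ * G * M * (Ψ * G) := by
    rw [← Matrix.mul_assoc, hMW, Matrix.mul_assoc (Ψ * G), ← Matrix.mul_assoc M, hMW,
      ← Matrix.mul_assoc (Ψ * G), ← Matrix.mul_assoc (Ψ * G), hGΨ]
  refine ((hM.isSelfAdjoint.commute_iff hG.isSelfAdjoint).2 ?_).eq.symm
  rw [hinv]
  exact hM.isSelfAdjoint.conjugate_self hG.isSelfAdjoint

variable [DecidableEq m]

theorem IsSupportProjection.mul_eq (hP : IsSupportProjection (Ψ * Ψᴴ) P) : P * Ψ = Ψ :=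
  mul_eq_of_mul_self_mul_conjTranspose hP.2.2.1

theorem IsSupportProjection.exists_eq_mul (hP : IsSupportProjection (Ψ * Ψᴴ) P) :
    ∃ G : Matrix n m ℂ, P = Ψ * G := by
  obtain ⟨hPH, -, -, hker⟩ := hP
  obtain ⟨G, hG, hGΨ⟩ := exists_isHermitian_mul_mul_self_eq Ψ
  have hΨG : Ψᴴ * (Ψ * G) = Ψᴴ := by
    simpa only [conjTranspose_mul, hG.eq, ← Matrix.mul_assoc] using congr_arg conjTranspose hGΨ
  -- the range of `1 - Ψ * G` lies in `ker Ψᴴ = ker (Ψ * Ψᴴ)`, which `P` kills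
  have hQ : Ψᴴ * (1 - Ψ * G) = 0 := by rw [Matrix.mul_sub, Matrix.mul_one, hΨG, sub_self]
  have hPQ : P * (1 - Ψ * G) = 0 := ext_iff_mulVec.2 fun v => by
    rw [zero_mulVec, ← mulVec_mulVec]
    exact hker _ (by rw [mulVec_mulVec, Matrix.mul_assoc, hQ, Matrix.mul_zero, zero_mulVec])
  have hP : P = P * (Ψ * G) := by
    rwa [Matrix.mul_sub, Matrix.mul_one, sub_eq_zero] at hPQ
  refine ⟨G * P, ?_⟩
  rw [← Matrix.mul_assoc, ← hG.eq, ← hPH.eq, ← conjTranspose_mul, ← hP, hPH.eq]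

theorem IsSupportProjection.exists_mul_eq_mul_of_commute
    (hP : IsSupportProjection (Ψ * Ψᴴ) P) (hPM : P * M = M * P) :
    ∃ W : Matrix n n ℂ, M * Ψ = Ψ * W := by
  obtain ⟨G, hG⟩ := hP.exists_eq_mul
  refine ⟨G * M * Ψ, ?_⟩
  calc M * Ψ = M * P * Ψ := by rw [Matrix.mul_assoc, hP.mul_eq]
    _ = Ψ * (G * M * Ψ) := by rw [← hPM, hG, Matrix.mul_assoc, Matrix.mul_assoc, Matrix.mul_assoc]

theorem isSupportProjection_mul (hG : (Ψ * G).IsHermitian) (hGΨ : Ψ * G * Ψ = Ψ) :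
    IsSupportProjection (Ψ * Ψᴴ) (Ψ * G) := by
  refine ⟨hG, by rw [← Matrix.mul_assoc, hGΨ], by rw [← Matrix.mul_assoc, hGΨ], fun v hv => ?_⟩
  rw [self_mul_conjTranspose_mulVec_eq_zero] at hv
  rw [← hG.eq, conjTranspose_mul, ← mulVec_mulVec, hv, mulVec_zero]

theorem exists_isSupportProjection_forall_commute (Ψ : Matrix m n ℂ) :
    ∃ P, IsSupportProjection (Ψ * Ψᴴ) P ∧ ∀ M : Matrix m m ℂ, M.IsHermitian →
      (∃ W : Matrix n n ℂ, M * Ψ = Ψ * W) → P * M = M * P := by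
  obtain ⟨G, hG, hGΨ⟩ := exists_isHermitian_mul_mul_self_eq Ψ
  exact ⟨Ψ * G, isSupportProjection_mul hG hGΨ,
    fun M hM ⟨W, hMW⟩ => commute_mul_of_mul_eq_mul hG hGΨ hM hMW⟩

end SupportProjection

section CoeffMatrix

variable {m n : Type}

def coeffMatrix (ψ : m × n → ℂ) : Matrix m n ℂ :=
  Matrix.of fun i j => ψ (i, j)

theorem vec_transpose_coeffMatrix (ψ : m × n → ℂ) : vec (coeffMatrix ψ)ᵀ = ψ :=
  rfl

variable [Fintype m] [Fintype n]

theorem kronecker_one_mulVec [DecidableEq n] (M : Matrix m m ℂ) (ψ : m × n → ℂ) :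
    (M ⊗ₖ (1 : Matrix n n ℂ)) *ᵥ ψ = vec ((coeffMatrix ψ)ᵀ * Mᵀ) := by
  simpa only [Matrix.one_mul, vec_transpose_coeffMatrix] using
    kronecker_mulVec_vec (1 : Matrix n n ℂ) (coeffMatrix ψ)ᵀ M

theorem one_kronecker_mulVec [DecidableEq m] (N : Matrix n n ℂ) (ψ : m × n → ℂ) :
    ((1 : Matrix m m ℂ) ⊗ₖ N) *ᵥ ψ = vec (N * (coeffMatrix ψ)ᵀ) := by
  simpa only [transpose_one, Matrix.mul_one, vec_transpose_coeffMatrix] using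
    kronecker_mulVec_vec N (coeffMatrix ψ)ᵀ (1 : Matrix m m ℂ)

variable [DecidableEq m] [DecidableEq n]

theorem exists_kronecker_one_mulVec_eq_iff (M : Matrix m m ℂ) (ψ : m × n → ℂ) :
    (∃ Mh : Matrix n n ℂ, (M ⊗ₖ (1 : Matrix n n ℂ)) *ᵥ ψ = ((1 : Matrix m m ℂ) ⊗ₖ Mh) *ᵥ ψ) ↔
      ∃ W : Matrix n n ℂ, M * coeffMatrix ψ = coeffMatrix ψ * W := by
  simp only [kronecker_one_mulVec, one_kronecker_mulVec, vec_inj]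
  refine ⟨fun ⟨Mh, h⟩ => ⟨Mhᵀ, ?_⟩, fun ⟨W, h⟩ => ⟨Wᵀ, ?_⟩⟩
  · rw [← transpose_transpose (M * _), transpose_mul, h, transpose_mul, transpose_transpose]
  · rw [← transpose_mul, h, transpose_mul]

theorem exists_one_kronecker_mulVec_eq_iff (N : Matrix n n ℂ) (ψ : m × n → ℂ) :
    (∃ Nh : Matrix m m ℂ, ((1 : Matrix m m ℂ) ⊗ₖ N) *ᵥ ψ = (Nh ⊗ₖ (1 : Matrix n n ℂ)) *ᵥ ψ) ↔
      ∃ W : Matrix m m ℂ, N * (coeffMatrix ψ)ᵀ = (coeffMatrix ψ)ᵀ * W := by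
  simp only [kronecker_one_mulVec, one_kronecker_mulVec, vec_inj]
  exact ⟨fun ⟨Nh, h⟩ => ⟨Nhᵀ, h⟩, fun ⟨W, h⟩ => ⟨Wᵀ, by rwa [transpose_transpose]⟩⟩

end CoeffMatrix

theorem redA_eq {m n : ℕ} (ψ : Fin m × Fin n → ℂ) :
    redA ψ = coeffMatrix ψ * (coeffMatrix ψ)ᴴ := by
  ext i i'
  simp [redA, coeffMatrix, mul_apply]

theorem redB_eq {m n : ℕ} (ψ : Fin m × Fin n → ℂ) :
    redB ψ = (coeffMatrix ψ)ᵀ * (coeffMatrix ψ)ᵀᴴ := by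
  ext j j'
  simp [redB, coeffMatrix, mul_apply]

/-- A quantum model is centrally supported iff each Alice operator can be
moved to Bob's side on `ψ` and vice versa. -/
theorem statement9 {X Y A B : Type} [Fintype A] [Fintype B]
    (S : QModel X Y A B) :
    CentrallySupported S ↔
      ((∀ (x : X) (a : A), ∃ Mh : Matrix (Fin S.dB) (Fin S.dB) ℂ,
          (S.M x a ⊗ₖ (1 : Matrix (Fin S.dB) (Fin S.dB) ℂ)).mulVec S.ψ
            = ((1 : Matrix (Fin S.dA) (Fin S.dA) ℂ) ⊗ₖ Mh).mulVec S.ψ)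
        ∧ (∀ (y : Y) (b : B), ∃ Nh : Matrix (Fin S.dA) (Fin S.dA) ℂ,
          ((1 : Matrix (Fin S.dA) (Fin S.dA) ℂ) ⊗ₖ S.N y b).mulVec S.ψ
            = (Nh ⊗ₖ (1 : Matrix (Fin S.dB) (Fin S.dB) ℂ)).mulVec S.ψ)) := by
  simp only [CentrallySupported, redA_eq, redB_eq, exists_kronecker_one_mulVec_eq_iff,
    exists_one_kronecker_mulVec_eq_iff]
  constructor
  · rintro ⟨PA, PB, hPA, hPB, hMA, hNB⟩
    exact ⟨fun x a => hPA.exists_mul_eq_mul_of_commute (hMA x a),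
      fun y b => hPB.exists_mul_eq_mul_of_commute (hNB y b)⟩
  · rintro ⟨hM, hN⟩
    obtain ⟨PA, hPA, hcA⟩ := exists_isSupportProjection_forall_commute (coeffMatrix S.ψ)
    obtain ⟨PB, hPB, hcB⟩ := exists_isSupportProjection_forall_commute (coeffMatrix S.ψ)ᵀ
    exact ⟨PA, PB, hPA, hPB, fun x a => hcA _ (S.M_pos x a).1 (hM x a),
      fun y b => hcB _ (S.N_pos y b).1 (hN y b)⟩

end SelfTestPaper
end
end

section
/- Let S be a full-rank quantum model. If there exists a projective quantum model S' with f_S = f_{S'} (i.e., the abstract state defined by S is projective), then S itself is projective. -/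
open scoped Matrix Kronecker ComplexOrder

noncomputable section

namespace Matrix

section Kronecker

variable {R m n : Type*} [Semiring R] [Fintype m] [Fintype n]

theorem kronecker_one_mulVec_apply [DecidableEq n] (D : Matrix m m R) (ψ : m × n → R)
    (i : m) (j : n) : ((D ⊗ₖ (1 : Matrix n n R)) *ᵥ ψ) (i, j) = (D *ᵥ fun i => ψ (i, j)) i := by
  simp [mulVec, dotProduct, Fintype.sum_prod_type, one_apply]

theorem one_kronecker_mulVec_apply [DecidableEq m] (D : Matrix n n R) (ψ : m × n → R)
    (i : m) (j : n) : (((1 : Matrix m m R) ⊗ₖ D) *ᵥ ψ) (i, j) = (D *ᵥ fun j => ψ (i, j)) j := by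
  simp [mulVec, dotProduct, Fintype.sum_prod_type, one_apply]

variable [Star R]

theorem star_dotProduct_kronecker_one_mulVec [DecidableEq n] (D : Matrix m m R)
    (ψ : m × n → R) :
    star ψ ⬝ᵥ (D ⊗ₖ (1 : Matrix n n R)) *ᵥ ψ
      = ∑ j, star (fun i => ψ (i, j)) ⬝ᵥ D *ᵥ fun i => ψ (i, j) := by
  simp only [dotProduct, Fintype.sum_prod_type, kronecker_one_mulVec_apply, Pi.star_apply]
  exact Finset.sum_comm

theorem star_dotProduct_one_kronecker_mulVec [DecidableEq m] (D : Matrix n n R)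
    (ψ : m × n → R) :
    star ψ ⬝ᵥ ((1 : Matrix m m R) ⊗ₖ D) *ᵥ ψ
      = ∑ i, star (fun j => ψ (i, j)) ⬝ᵥ D *ᵥ fun j => ψ (i, j) := by
  simp only [dotProduct, Fintype.sum_prod_type, one_kronecker_mulVec_apply, Pi.star_apply]

end Kronecker

variable {𝕜 n : Type*} [RCLike 𝕜] [Fintype n] [DecidableEq n]

theorem PosSemidef.sub_mul_self {M : Matrix n n 𝕜} (hM : M.PosSemidef)
    (hM' : (1 - M).PosSemidef) : (M - M * M).PosSemidef := by
  -- `M - M² = (1 - M)ᴴ M (1 - M) + Mᴴ (1 - M) M`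
  have h := (hM.conjTranspose_mul_mul_same (1 - M)).add (hM'.conjTranspose_mul_mul_same M)
  rw [conjTranspose_sub, conjTranspose_one, hM.1.eq] at h
  convert h using 1
  noncomm_ring

theorem PosSemidef.eq_zero_of_sum_dotProduct_mulVec_eq_zero {κ : Type*} [Fintype κ]
    {D : Matrix n n 𝕜} (hD : D.PosSemidef) (v : κ → n → 𝕜)
    (hv : IsUnit (∑ k, vecMulVec (v k) (star (v k))))
    (h : ∑ k, star (v k) ⬝ᵥ D *ᵥ v k = 0) : D = 0 := by
  have hDv : ∀ k, D *ᵥ v k = 0 := fun k =>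
    (hD.dotProduct_mulVec_zero_iff _).1 <|
      (Finset.sum_eq_zero_iff_of_nonneg fun k _ => hD.dotProduct_mulVec_nonneg (v k)).1 h k
        (Finset.mem_univ k)
  refine (hv.mul_left_eq_zero).1 ?_
  simp only [Finset.mul_sum, mul_vecMulVec, hDv, zero_vecMulVec, Finset.sum_const_zero]

end Matrix

namespace SelfTestPaper

open Matrix

section Reduced

variable {m n : ℕ}

theorem redA_eq_sum_vecMulVec (ψ : Fin m × Fin n → ℂ) :
    redA ψ = ∑ j, vecMulVec (fun i => ψ (i, j)) (star fun i => ψ (i, j)) := by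
  ext i i'
  simp [redA, vecMulVec_apply, Matrix.sum_apply]

theorem redB_eq_sum_vecMulVec (ψ : Fin m × Fin n → ℂ) :
    redB ψ = ∑ i, vecMulVec (fun j => ψ (i, j)) (star fun j => ψ (i, j)) := by
  ext j j'
  simp [redB, vecMulVec_apply, Matrix.sum_apply]

theorem mul_self_eq_of_star_dotProduct_kronecker_one_mulVec_eq {M : Matrix (Fin m) (Fin m) ℂ}
    {ψ : Fin m × Fin n → ℂ} (hψ : ∀ v, redA ψ *ᵥ v = 0 → v = 0) (hM : M.PosSemidef)
    (hM' : (1 - M).PosSemidef)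
    (h : star ψ ⬝ᵥ ((M * M) ⊗ₖ (1 : Matrix (Fin n) (Fin n) ℂ)) *ᵥ ψ
      = star ψ ⬝ᵥ (M ⊗ₖ (1 : Matrix (Fin n) (Fin n) ℂ)) *ᵥ ψ) :
    M * M = M := by
  rw [star_dotProduct_kronecker_one_mulVec, star_dotProduct_kronecker_one_mulVec] at h
  refine (sub_eq_zero.1 <| (hM.sub_mul_self hM').eq_zero_of_sum_dotProduct_mulVec_eq_zero _
    (redA_eq_sum_vecMulVec ψ ▸ mulVec_injective_iff_isUnit.1
      ((injective_iff_map_eq_zero (mulVecLin _)).2 hψ)) ?_).symm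
  simp only [sub_mulVec, dotProduct_sub, Finset.sum_sub_distrib, h, sub_self]

theorem mul_self_eq_of_star_dotProduct_one_kronecker_mulVec_eq {N : Matrix (Fin n) (Fin n) ℂ}
    {ψ : Fin m × Fin n → ℂ} (hψ : ∀ v, redB ψ *ᵥ v = 0 → v = 0) (hN : N.PosSemidef)
    (hN' : (1 - N).PosSemidef)
    (h : star ψ ⬝ᵥ ((1 : Matrix (Fin m) (Fin m) ℂ) ⊗ₖ (N * N)) *ᵥ ψ
      = star ψ ⬝ᵥ ((1 : Matrix (Fin m) (Fin m) ℂ) ⊗ₖ N) *ᵥ ψ) :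
    N * N = N := by
  rw [star_dotProduct_one_kronecker_mulVec, star_dotProduct_one_kronecker_mulVec] at h
  refine (sub_eq_zero.1 <| (hN.sub_mul_self hN').eq_zero_of_sum_dotProduct_mulVec_eq_zero _
    (redB_eq_sum_vecMulVec ψ ▸ mulVec_injective_iff_isUnit.1
      ((injective_iff_map_eq_zero (mulVecLin _)).2 hψ)) ?_).symm
  simp only [sub_mulVec, dotProduct_sub, Finset.sum_sub_distrib, h, sub_self]

end Reduced

namespace QModel

variable {X Y A B : Type} [Fintype A] [Fintype B] (S : QModel X Y A B)

theorem posSemidef_one_sub_M (x : X) (a : A) : (1 - S.M x a).PosSemidef := by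
  classical
  rw [← S.M_sum x, ← Finset.add_sum_erase _ _ (Finset.mem_univ a), add_sub_cancel_left]
  exact posSemidef_sum _ fun a' _ => S.M_pos x a'

theorem posSemidef_one_sub_N (y : Y) (b : B) : (1 - S.N y b).PosSemidef := by
  classical
  rw [← S.N_sum y, ← Finset.add_sum_erase _ _ (Finset.mem_univ b), add_sub_cancel_left]
  exact posSemidef_sum _ fun b' _ => S.N_pos y b'

theorem wordValue_eq_star_dotProduct (wA : List (X × A)) (wB : List (Y × B)) :
    wordValue S wA wB = star S.ψ ⬝ᵥ (((wA.map fun q => S.M q.1 q.2).prod) ⊗ₖ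
      ((wB.map fun q => S.N q.1 q.2).prod)) *ᵥ S.ψ :=
  rfl

end QModel

namespace SameState

variable {X Y A B : Type} [Fintype A] [Fintype B] {S S' : QModel X Y A B}

theorem star_dotProduct_M_mul_self_kronecker_one_mulVec (h : SameState S S')
    (hS' : Projective S') (x : X) (a : A) :
    star S.ψ ⬝ᵥ ((S.M x a * S.M x a) ⊗ₖ (1 : Matrix (Fin S.dB) (Fin S.dB) ℂ)) *ᵥ S.ψ
      = star S.ψ ⬝ᵥ (S.M x a ⊗ₖ (1 : Matrix (Fin S.dB) (Fin S.dB) ℂ)) *ᵥ S.ψ := by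
  have h₂ := h [(x, a), (x, a)] []
  have h₁ := h [(x, a)] []
  simp only [QModel.wordValue_eq_star_dotProduct, List.map_cons, List.map_nil, List.prod_cons,
    List.prod_nil, mul_one, (hS'.1 x a).2] at h₁ h₂
  exact h₂.trans h₁.symm

theorem star_dotProduct_one_kronecker_N_mul_self_mulVec (h : SameState S S')
    (hS' : Projective S') (y : Y) (b : B) :
    star S.ψ ⬝ᵥ ((1 : Matrix (Fin S.dA) (Fin S.dA) ℂ) ⊗ₖ (S.N y b * S.N y b)) *ᵥ S.ψ
      = star S.ψ ⬝ᵥ ((1 : Matrix (Fin S.dA) (Fin S.dA) ℂ) ⊗ₖ S.N y b) *ᵥ S.ψ := by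
  have h₂ := h [] [(y, b), (y, b)]
  have h₁ := h [] [(y, b)]
  simp only [QModel.wordValue_eq_star_dotProduct, List.map_cons, List.map_nil, List.prod_cons,
    List.prod_nil, mul_one, (hS'.2 y b).2] at h₁ h₂
  exact h₂.trans h₁.symm

end SameState

/-- A full-rank model whose abstract state is projective (i.e. agrees with the
abstract state of some projective model) is itself projective. -/
theorem statement13 {X Y A B : Type} [Fintype A] [Fintype B]
    (S : QModel X Y A B) (hfr : FullRank S)
    (h : ∃ S' : QModel X Y A B, Projective S' ∧ SameState S S') :
    Projective S := by
  obtain ⟨S', hS', hSS'⟩ := h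
  refine ⟨fun x a => ⟨(S.M_pos x a).1, ?_⟩, fun y b => ⟨(S.N_pos y b).1, ?_⟩⟩
  · exact mul_self_eq_of_star_dotProduct_kronecker_one_mulVec_eq hfr.1 (S.M_pos x a)
      (S.posSemidef_one_sub_M x a) (hSS'.star_dotProduct_M_mul_self_kronecker_one_mulVec hS' x a)
  · exact mul_self_eq_of_star_dotProduct_one_kronecker_mulVec_eq hfr.2 (S.N_pos y b)
      (S.posSemidef_one_sub_N y b) (hSS'.star_dotProduct_one_kronecker_N_mul_self_mulVec hS' y b)

end SelfTestPaper
end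
end

section
/- Let p ∈ C_q(X,X,A,A) be a synchronous quantum correlation and let S = (H_A, H_B, {M^x_a}, {N^y_b}, |ψ⟩) be any quantum model for p. Then (M^x_a ⊗ Id)|ψ⟩ = (Id ⊗ N^x_a)|ψ⟩ for all x ∈ X and a ∈ A. If in addition |ψ⟩ is full-rank (its Schmidt rank equals dim H_A = dim H_B), then S is a projective quantum model. -/
open scoped Matrix Kronecker ComplexOrder

noncomputable section

namespace SelfTestPaper

variable {X Y A B : Type} [Fintype A] [Fintype B]

/-!
Since `M^x_a ⊗ N^x_b` is positive semidefinite, `p(a,b|x,x) = ⟨ψ|M^x_a ⊗ N^x_b|ψ⟩ = 0` forces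
`(M^x_a ⊗ N^x_b)ψ = 0` for `a ≠ b`. Inserting `∑_b N^x_b = 1` (resp. `∑_a M^x_a = 1`) then gives
`(M^x_a ⊗ 1)ψ = (M^x_a ⊗ N^x_a)ψ = (1 ⊗ N^x_a)ψ`, and therefore
`(M² ⊗ 1)ψ = (M ⊗ 1)(1 ⊗ N)ψ = (M ⊗ N)ψ = (M ⊗ 1)ψ`.
Writing `ψ` as a matrix `Ψ`, `(T ⊗ 1)ψ` is `TΨ` and the reduced state is `ΨΨᴴ`; when the latter
is nondegenerate, `TΨ = 0` implies `ΨΨᴴTᴴ = 0`, hence `T = 0`, so `M² = M`.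
Bob's side is Alice's side of the model with the two parties exchanged.
-/

open Matrix

section Kronecker

variable {m n : Type} [Fintype m] [Fintype n]

theorem qInner_comp_swap (v w : m × n → ℂ) :
    qInner (v ∘ Prod.swap) (w ∘ Prod.swap) = qInner v w :=
  Fintype.sum_equiv (Equiv.prodComm n m) _ _ fun _ => rfl

theorem kronecker_mulVec_comp_swap (A : Matrix m m ℂ) (B : Matrix n n ℂ) (ψ : m × n → ℂ) :
    (B ⊗ₖ A) *ᵥ (ψ ∘ Prod.swap) = ((A ⊗ₖ B) *ᵥ ψ) ∘ Prod.swap := by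
  have hswap : B ⊗ₖ A = (A ⊗ₖ B).submatrix Prod.swap (Equiv.prodComm n m) := by
    ext; simp [mul_comm]
  rw [hswap, submatrix_mulVec_equiv]
  rfl

theorem kronecker_one_mulVec_apply [DecidableEq n] (T : Matrix m m ℂ) (ψ : m × n → ℂ)
    (i : m) (j : n) :
    ((T ⊗ₖ (1 : Matrix n n ℂ)) *ᵥ ψ) (i, j) = (T * of (Function.curry ψ)) i j := by
  simp [mulVec, dotProduct, Fintype.sum_prod_type, mul_apply, one_apply]

theorem mul_self_kronecker_one_mulVec_eq [DecidableEq m] [DecidableEq n]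
    {M : Matrix m m ℂ} {N : Matrix n n ℂ} {ψ : m × n → ℂ}
    (hsteer : (M ⊗ₖ (1 : Matrix n n ℂ)) *ᵥ ψ = ((1 : Matrix m m ℂ) ⊗ₖ N) *ᵥ ψ)
    (hMN : (M ⊗ₖ (1 : Matrix n n ℂ)) *ᵥ ψ = (M ⊗ₖ N) *ᵥ ψ) :
    ((M * M) ⊗ₖ (1 : Matrix n n ℂ)) *ᵥ ψ = (M ⊗ₖ (1 : Matrix n n ℂ)) *ᵥ ψ :=
  calc ((M * M) ⊗ₖ (1 : Matrix n n ℂ)) *ᵥ ψ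
      = (M ⊗ₖ (1 : Matrix n n ℂ)) *ᵥ ((M ⊗ₖ (1 : Matrix n n ℂ)) *ᵥ ψ) := by
        rw [mulVec_mulVec, ← mul_kronecker_mul, Matrix.one_mul]
    _ = (M ⊗ₖ (1 : Matrix n n ℂ)) *ᵥ (((1 : Matrix m m ℂ) ⊗ₖ N) *ᵥ ψ) := by rw [hsteer]
    _ = (M ⊗ₖ N) *ᵥ ψ := by
        rw [mulVec_mulVec, ← mul_kronecker_mul, Matrix.mul_one, Matrix.one_mul]
    _ = (M ⊗ₖ (1 : Matrix n n ℂ)) *ᵥ ψ := hMN.symm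

end Kronecker

section ReducedState

variable {dA dB : ℕ}

theorem redA_eq_mul_conjTranspose (ψ : Fin dA × Fin dB → ℂ) :
    redA ψ = of (Function.curry ψ) * (of (Function.curry ψ))ᴴ := by
  ext; simp [redA, mul_apply]

theorem kronecker_one_mulVec_injective {ψ : Fin dA × Fin dB → ℂ}
    (hψ : ∀ v, redA ψ *ᵥ v = 0 → v = 0) :
    Function.Injective fun T : Matrix (Fin dA) (Fin dA) ℂ =>
      (T ⊗ₖ (1 : Matrix (Fin dB) (Fin dB) ℂ)) *ᵥ ψ := by
  intro T T' (h : (T ⊗ₖ 1) *ᵥ ψ = (T' ⊗ₖ 1) *ᵥ ψ)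
  have hΨ : (T - T') * of (Function.curry ψ) = 0 := by
    ext i j
    rw [Matrix.sub_mul, Matrix.sub_apply, ← kronecker_one_mulVec_apply,
      ← kronecker_one_mulVec_apply, h, sub_self, Matrix.zero_apply]
  have hred : redA ψ * (T - T')ᴴ = 0 := by
    rw [redA_eq_mul_conjTranspose, Matrix.mul_assoc, ← conjTranspose_mul, hΨ,
      conjTranspose_zero, Matrix.mul_zero]
  have hstar : (T - T')ᴴ = 0 := ext_iff_mulVec.2 fun v =>
    (hψ _ (by rw [mulVec_mulVec, hred, zero_mulVec])).trans (zero_mulVec v).symm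
  exact sub_eq_zero.1 (conjTranspose_eq_zero.1 hstar)

end ReducedState

def QModel.swap {X Y A B : Type} [Fintype A] [Fintype B] (S : QModel X Y A B) :
    QModel Y X B A where
  dA := S.dB
  dB := S.dA
  M := S.N
  N := S.M
  ψ := S.ψ ∘ Prod.swap
  M_pos := S.N_pos
  M_sum := S.N_sum
  N_pos := S.M_pos
  N_sum := S.M_sum
  ψ_unit := by rw [← S.ψ_unit]; exact qInner_comp_swap S.ψ S.ψ

namespace Realizes

theorem swap {X Y A B : Type} [Fintype A] [Fintype B] {S : QModel X Y A B}
    {p : A → B → X → Y → ℝ} (hS : Realizes S p) :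
    Realizes S.swap (fun b a y x => p a b x y) := fun b a y x => by
  rw [← hS a b x y, ← qInner_comp_swap S.ψ]
  exact congrArg _ (kronecker_mulVec_comp_swap _ _ _)

variable {X A : Type} [Fintype A] {p : A → A → X → X → ℝ} {S : QModel X X A A}

theorem kronecker_mulVec_eq_zero (hS : Realizes S p) {x y : X} {a b : A}
    (hp : p a b x y = 0) : (S.M x a ⊗ₖ S.N y b) *ᵥ S.ψ = 0 :=
  ((S.M_pos x a).kronecker (S.N_pos y b)).dotProduct_mulVec_zero_iff S.ψ |>.1 <| by
    have h := hS a b x y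
    rwa [hp, Complex.ofReal_zero] at h

theorem kronecker_one_mulVec_eq_of_synchronous (hS : Realizes S p)
    (hsync : ∀ (x : X) (a b : A), a ≠ b → p a b x x = 0) (x : X) (a : A) :
    (S.M x a ⊗ₖ (1 : Matrix (Fin S.dB) (Fin S.dB) ℂ)) *ᵥ S.ψ = (S.M x a ⊗ₖ S.N x a) *ᵥ S.ψ :=
  calc (S.M x a ⊗ₖ (1 : Matrix (Fin S.dB) (Fin S.dB) ℂ)) *ᵥ S.ψ
      = (S.M x a ⊗ₖ ∑ b, S.N x b) *ᵥ S.ψ := by rw [S.N_sum]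
    _ = ∑ b, (S.M x a ⊗ₖ S.N x b) *ᵥ S.ψ := by
      rw [← sum_mulVec]
      exact congrArg (· *ᵥ S.ψ) (map_sum (kroneckerBilinear (R := ℂ) (S.M x a)) _ _)
    _ = (S.M x a ⊗ₖ S.N x a) *ᵥ S.ψ := Fintype.sum_eq_single a fun b hb =>
      hS.kronecker_mulVec_eq_zero (hsync x a b hb.symm)

theorem one_kronecker_mulVec_eq_of_synchronous (hS : Realizes S p)
    (hsync : ∀ (x : X) (a b : A), a ≠ b → p a b x x = 0) (x : X) (a : A) :
    ((1 : Matrix (Fin S.dA) (Fin S.dA) ℂ) ⊗ₖ S.N x a) *ᵥ S.ψ = (S.M x a ⊗ₖ S.N x a) *ᵥ S.ψ := by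
  have h : (S.N x a ⊗ₖ (1 : Matrix (Fin S.dA) (Fin S.dA) ℂ)) *ᵥ (S.ψ ∘ Prod.swap)
      = (S.N x a ⊗ₖ S.M x a) *ᵥ (S.ψ ∘ Prod.swap) :=
    hS.swap.kronecker_one_mulVec_eq_of_synchronous (fun x a b hab => hsync x b a hab.symm) x a
  rw [kronecker_mulVec_comp_swap, kronecker_mulVec_comp_swap] at h
  exact Prod.swap_surjective.injective_comp_right h

theorem kronecker_one_mulVec_eq_one_kronecker_mulVec (hS : Realizes S p)
    (hsync : ∀ (x : X) (a b : A), a ≠ b → p a b x x = 0) (x : X) (a : A) :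
    (S.M x a ⊗ₖ (1 : Matrix (Fin S.dB) (Fin S.dB) ℂ)) *ᵥ S.ψ
      = ((1 : Matrix (Fin S.dA) (Fin S.dA) ℂ) ⊗ₖ S.N x a) *ᵥ S.ψ :=
  (hS.kronecker_one_mulVec_eq_of_synchronous hsync x a).trans
    (hS.one_kronecker_mulVec_eq_of_synchronous hsync x a).symm

theorem M_mul_self_of_synchronous (hS : Realizes S p)
    (hsync : ∀ (x : X) (a b : A), a ≠ b → p a b x x = 0)
    (hψ : ∀ v, redA S.ψ *ᵥ v = 0 → v = 0) (x : X) (a : A) :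
    S.M x a * S.M x a = S.M x a :=
  kronecker_one_mulVec_injective hψ <| mul_self_kronecker_one_mulVec_eq
    (hS.kronecker_one_mulVec_eq_one_kronecker_mulVec hsync x a)
    (hS.kronecker_one_mulVec_eq_of_synchronous hsync x a)

end Realizes

/-- For a synchronous correlation `p`, every quantum model satisfies
`(M^x_a ⊗ Id)|ψ⟩ = (Id ⊗ N^x_a)|ψ⟩`; if moreover the model is full-rank, it is projective. -/
theorem statement15 {X A : Type} [Fintype A]
    (p : A → A → X → X → ℝ)
    (hsync : ∀ (x : X) (a b : A), a ≠ b → p a b x x = 0)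
    (S : QModel X X A A) (hS : Realizes S p) :
    (∀ (x : X) (a : A),
      (S.M x a ⊗ₖ (1 : Matrix (Fin S.dB) (Fin S.dB) ℂ)).mulVec S.ψ
        = ((1 : Matrix (Fin S.dA) (Fin S.dA) ℂ) ⊗ₖ S.N x a).mulVec S.ψ)
    ∧ (FullRank S → Projective S) :=
  ⟨hS.kronecker_one_mulVec_eq_one_kronecker_mulVec hsync, fun ⟨hψA, hψB⟩ =>
    ⟨fun x a => ⟨(S.M_pos x a).isHermitian, hS.M_mul_self_of_synchronous hsync hψA x a⟩,
      fun y b => ⟨(S.N_pos y b).isHermitian,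
        hS.swap.M_mul_self_of_synchronous (fun x a b hab => hsync x b a hab.symm) hψB y b⟩⟩⟩

end SelfTestPaper
end
end

section
/- Let p ∈ C_q(X,X,A,A) be a synchronous quantum correlation. Then for every quantum model S for p there exists a projective quantum model S' for p with f_S = f_{S'} (the abstract state defined by any model for p is projective). Consequently, any two quantum models for p define the same abstract state if and only if any two projective quantum models for p define the same abstract state. -/
open scoped Matrix Kronecker ComplexOrder

noncomputable section

namespace SelfTestPaper

variable {X Y A B : Type} [Fintype A] [Fintype B]

/-! Synchronicity makes `(M^x_a ⊗ N^x_b)ψ = 0` for `a ≠ b`, since a positive operator with zero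
expectation kills the vector. Summing over the POVMs gives `(M^x_a ⊗ 1)ψ = (1 ⊗ N^x_a)ψ =
(M^x_a ⊗ N^x_a)ψ`, and hence `((M^x_a)² ⊗ 1)ψ = (M^x_a ⊗ 1)ψ`. So every `M^x_a` leaves Alice's
support of `ψ` invariant and is a projection there. With `P` the orthogonal projection onto that
support, `M^x_a P`, plus `1 - P` for one fixed outcome, is a projective POVM whose words agree
with those of `M` on `ψ`. Doing the same for Bob gives a projective model with the same state
and the same abstract state. -/

open Matrix

section RangeProjection

variable {𝕜 : Type*} [RCLike 𝕜] {n m : Type*} [Fintype n] [Fintype m]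

def IsRangeProjection (Φ : Matrix n m 𝕜) (P : Matrix n n 𝕜) : Prop :=
  IsStarProjection P ∧ P * Φ = Φ ∧ ∃ C : Matrix m n 𝕜, P = Φ * C

theorem exists_isRangeProjection [DecidableEq n] (Φ : Matrix n m 𝕜) :
    ∃ P, IsRangeProjection Φ P := by
  let U : Submodule 𝕜 (EuclideanSpace 𝕜 n) :=
    (LinearMap.range Φ.mulVecLin).comap (WithLp.linearEquiv 2 𝕜 (n → 𝕜)).toLinearMap
  have hU (v : n → 𝕜) : WithLp.toLp 2 v ∈ U ↔ ∃ c, Φ *ᵥ c = v := Iff.rfl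
  let e := (toEuclideanCLM (𝕜 := 𝕜) (n := n)).symm
  let P : Matrix n n 𝕜 := e U.starProjection
  have hPv (v : n → 𝕜) : WithLp.toLp 2 (P *ᵥ v) = U.starProjection (WithLp.toLp 2 v) := by
    rw [← toEuclideanCLM_toLp, StarAlgEquiv.apply_symm_apply]
  have hcol (j : n) : ∃ c, Φ *ᵥ c = P.col j := by
    rw [← hU, ← mulVec_single_one, hPv]
    exact U.starProjection_apply_mem _
  choose c hc using hcol
  refine ⟨P, isStarProjection_starProjection.map e.toStarRingEquiv, ?_, (of c)ᵀ, ?_⟩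
  · refine ext_iff_mulVec.2 fun v => ?_
    rw [← mulVec_mulVec]
    exact congrArg WithLp.ofLp <|
      (hPv _).trans (U.starProjection_eq_self_iff.2 ((hU _).2 ⟨v, rfl⟩))
  · ext i j
    rw [← col_apply P j i, ← hc j]
    rfl

namespace IsRangeProjection

variable {Φ : Matrix n m 𝕜} {P : Matrix n n 𝕜}

theorem mul_eq_mul (hP : IsRangeProjection Φ P) {T T' : Matrix n n 𝕜}
    (h : T * Φ = T' * Φ) : T * P = T' * P := by
  obtain ⟨-, -, C, rfl⟩ := hP
  rw [← Matrix.mul_assoc, h, Matrix.mul_assoc]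

theorem commute (hP : IsRangeProjection Φ P) {T : Matrix n n 𝕜} (hT : IsSelfAdjoint T)
    {K : Matrix m m 𝕜} (hTK : T * Φ = Φ * K) : Commute P T := by
  obtain ⟨hPproj, hPΦ, C, hC⟩ := hP
  have hTP : T * P = Φ * K * C := by rw [hC, ← Matrix.mul_assoc, hTK]
  have hPTP : P * T * P = T * P := by
    rw [Matrix.mul_assoc, hTP, ← Matrix.mul_assoc, ← Matrix.mul_assoc, hPΦ]
  have hstar := congrArg star hPTP
  simp only [star_mul, hPproj.isSelfAdjoint.star_eq, hT.star_eq, Matrix.mul_assoc] at hstar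
  rw [Matrix.mul_assoc] at hPTP
  exact hstar.symm.trans hPTP

end IsRangeProjection

end RangeProjection

section Compression

theorem prod_map_mul_eq_of_mul_eq {R α : Type*} [Monoid R] {p : R} {f g : α → R}
    (hfg : ∀ a, f a * p = g a * p) (hg : ∀ a, Commute p (g a)) (l : List α) :
    (l.map f).prod * p = (l.map g).prod * p := by
  induction l with
  | nil => rfl
  | cons a l ih =>
    have hcomm : Commute p (l.map g).prod :=
      Commute.list_prod_right _ _ fun _ hx => by
        obtain ⟨b, -, rfl⟩ := List.mem_map.1 hx
        exact hg b
    simp only [List.map_cons, List.prod_cons, mul_assoc, ih, ← hcomm.eq]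
    rw [← mul_assoc, hfg, mul_assoc]

theorem isStarProjection_mul_of_commute {R : Type*} [Ring R] [StarRing R] {P T : R}
    (hP : IsStarProjection P) (hT : IsSelfAdjoint T) (hPT : Commute P T)
    (hsq : T * T * P = T * P) : IsStarProjection (T * P) where
  isSelfAdjoint := by
    rw [IsSelfAdjoint, star_mul, hP.isSelfAdjoint.star_eq, hT.star_eq, hPT.eq]
  isIdempotentElem := by
    rw [IsIdempotentElem, mul_assoc, ← mul_assoc P, hPT.eq, mul_assoc, hP.isIdempotentElem.eq,
      ← mul_assoc, hsq]

variable {𝕜 : Type*} [RCLike 𝕜] {ι : Type*} {n m : Type*} [Fintype n] [DecidableEq n]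
  [Fintype m]

theorem exists_projective_povm {M : ι → A → Matrix n n 𝕜} (hM : ∀ x a, (M x a).IsHermitian)
    (hsum : ∀ x, ∑ a, M x a = 1) (Φ : Matrix n m 𝕜)
    (hinv : ∀ x a, ∃ K, M x a * Φ = Φ * K) (hsq : ∀ x a, M x a * M x a * Φ = M x a * Φ) :
    ∃ M' : ι → A → Matrix n n 𝕜, (∀ x a, IsStarProjection (M' x a)) ∧ (∀ x, ∑ a, M' x a = 1) ∧
      ∀ w : List (ι × A),
        (w.map fun q => M' q.1 q.2).prod * Φ = (w.map fun q => M q.1 q.2).prod * Φ := by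
  classical
  rcases isEmpty_or_nonempty A with hA | ⟨⟨a₀⟩⟩
  · exact ⟨M, fun _ a => isEmptyElim a, hsum, fun _ => rfl⟩
  obtain ⟨P, hP⟩ := exists_isRangeProjection Φ
  have hcomm (x : ι) (a : A) : Commute P (M x a) :=
    let ⟨_, hK⟩ := hinv x a; hP.commute (hM x a) hK
  have hproj (x : ι) (a : A) : IsStarProjection (M x a * P) :=
    isStarProjection_mul_of_commute hP.1 (hM x a) (hcomm x a) (hP.mul_eq_mul (hsq x a))
  let M' (x : ι) (a : A) : Matrix n n 𝕜 := M x a * P + (Pi.single a₀ (1 - P) : A → _) a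
  have hM'P (x : ι) (a : A) : M' x a * P = M x a * P := by
    rcases eq_or_ne a a₀ with rfl | ha
    · simp [M', add_mul, mul_assoc, hP.1.isIdempotentElem.eq, hP.1.one_sub_mul_self]
    · simp [M', Pi.single_eq_of_ne ha, mul_assoc, hP.1.isIdempotentElem.eq]
  refine ⟨M', fun x a => ?_, fun x => ?_, fun w => ?_⟩
  · rcases eq_or_ne a a₀ with rfl | ha
    · simp only [M', Pi.single_eq_same]
      exact (hproj x a).add hP.1.one_sub (by rw [mul_assoc, hP.1.mul_one_sub_self, mul_zero])
    · simpa [M', Pi.single_eq_of_ne ha] using hproj x a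
  · rw [Finset.sum_add_distrib, ← Finset.sum_mul, hsum, one_mul, Finset.sum_pi_single',
      if_pos (Finset.mem_univ _), add_sub_cancel]
  · have hword := prod_map_mul_eq_of_mul_eq (fun q : ι × A => hM'P q.1 q.2)
      (fun q => hcomm q.1 q.2) w
    rw [← hP.2.1, ← Matrix.mul_assoc, ← Matrix.mul_assoc, hword]

end Compression

section Orthogonality

variable {R : Type*} [Semiring R] {n m : Type*} [Fintype n] [Fintype m]
  {L : A → Matrix n n R} {L' : A → Matrix m m R} {Φ : Matrix n m R}

theorem mul_eq_mul_mul_transpose_of_orthogonal [DecidableEq m] (hL' : ∑ a, L' a = 1)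
    (h : ∀ a b, a ≠ b → L a * Φ * (L' b)ᵀ = 0) (a : A) : L a * Φ = L a * Φ * (L' a)ᵀ :=
  calc L a * Φ = L a * Φ * (∑ b, L' b)ᵀ := by rw [hL', transpose_one, Matrix.mul_one]
    _ = ∑ b, L a * Φ * (L' b)ᵀ := by rw [transpose_sum, Matrix.mul_sum]
    _ = L a * Φ * (L' a)ᵀ := Finset.sum_eq_single a (fun b _ hb => h a b hb.symm) (by simp)

theorem mul_transpose_eq_mul_mul_transpose_of_orthogonal [DecidableEq n] (hL : ∑ a, L a = 1)
    (h : ∀ a b, a ≠ b → L a * Φ * (L' b)ᵀ = 0) (b : A) : Φ * (L' b)ᵀ = L b * Φ * (L' b)ᵀ :=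
  calc Φ * (L' b)ᵀ = (∑ a, L a) * Φ * (L' b)ᵀ := by rw [hL, Matrix.one_mul]
    _ = ∑ a, L a * Φ * (L' b)ᵀ := by rw [Matrix.sum_mul, Matrix.sum_mul]
    _ = L b * Φ * (L' b)ᵀ := Finset.sum_eq_single b (fun a _ ha => h a b ha) (by simp)

theorem mul_eq_mul_transpose_of_orthogonal [DecidableEq n] [DecidableEq m] (hL : ∑ a, L a = 1)
    (hL' : ∑ a, L' a = 1)
    (h : ∀ a b, a ≠ b → L a * Φ * (L' b)ᵀ = 0) (a : A) : L a * Φ = Φ * (L' a)ᵀ :=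
  (mul_eq_mul_mul_transpose_of_orthogonal hL' h a).trans
    (mul_transpose_eq_mul_mul_transpose_of_orthogonal hL h a).symm

theorem mul_self_mul_eq_of_orthogonal [DecidableEq n] [DecidableEq m] (hL : ∑ a, L a = 1)
    (hL' : ∑ a, L' a = 1)
    (h : ∀ a b, a ≠ b → L a * Φ * (L' b)ᵀ = 0) (a : A) : L a * L a * Φ = L a * Φ :=
  calc L a * L a * Φ = L a * (Φ * (L' a)ᵀ) := by
        rw [Matrix.mul_assoc, mul_eq_mul_transpose_of_orthogonal hL hL' h]
    _ = L a * Φ := by rw [← Matrix.mul_assoc, ← mul_eq_mul_mul_transpose_of_orthogonal hL' h]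

end Orthogonality

/-- The coefficient matrix of a bipartite vector. Since `Matrix.vec` stacks columns, Bob's index
labels its rows: `vec (stateMatrix ψ) = ψ` and `(F ⊗ₖ G) *ᵥ ψ = vec (G * stateMatrix ψ * Fᵀ)`. -/
def stateMatrix {m n : ℕ} (ψ : Fin m × Fin n → ℂ) : Matrix (Fin n) (Fin m) ℂ :=
  of fun j i => ψ (i, j)

theorem kronecker_mulVec_eq_vec {m n : ℕ} (F : Matrix (Fin m) (Fin m) ℂ)
    (G : Matrix (Fin n) (Fin n) ℂ) (ψ : Fin m × Fin n → ℂ) :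
    (F ⊗ₖ G) *ᵥ ψ = vec (G * stateMatrix ψ * Fᵀ) :=
  kronecker_mulVec_vec G (stateMatrix ψ) F

theorem kronecker_mulVec_congr {m n : ℕ} {F F' : Matrix (Fin m) (Fin m) ℂ}
    {G G' : Matrix (Fin n) (Fin n) ℂ} {ψ : Fin m × Fin n → ℂ}
    (hF : F' * (stateMatrix ψ)ᵀ = F * (stateMatrix ψ)ᵀ)
    (hG : G' * stateMatrix ψ = G * stateMatrix ψ) : (F' ⊗ₖ G') *ᵥ ψ = (F ⊗ₖ G) *ᵥ ψ := by
  have hF' : stateMatrix ψ * F'ᵀ = stateMatrix ψ * Fᵀ := by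
    simpa only [transpose_mul, transpose_transpose] using congrArg transpose hF
  rw [kronecker_mulVec_eq_vec, kronecker_mulVec_eq_vec, hG, Matrix.mul_assoc, hF',
    ← Matrix.mul_assoc]

theorem Realizes.of_sameState {S S' : QModel X Y A B} {p : A → B → X → Y → ℝ}
    (hS : Realizes S p) (h : SameState S S') : Realizes S' p := fun a b x y => by
  have hword := h [(x, a)] [(y, b)]
  simp only [wordValue, List.map_cons, List.map_nil, List.prod_singleton] at hword
  rw [← hword]
  exact hS a b x y

theorem stateMatrix_mul_mul_eq_zero {S : QModel X Y A B} {p : A → B → X → Y → ℝ}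
    (hS : Realizes S p) {x : X} {y : Y} {a : A} {b : B} (h : p a b x y = 0) :
    S.N y b * stateMatrix S.ψ * (S.M x a)ᵀ = 0 := by
  have hzero : (S.M x a ⊗ₖ S.N y b) *ᵥ S.ψ = 0 :=
    (((S.M_pos x a).kronecker (S.N_pos y b)).dotProduct_mulVec_zero_iff S.ψ).1 <|
      (hS a b x y).trans (by simp [h])
  rwa [kronecker_mulVec_eq_vec, ← vec_zero, vec_inj] at hzero

open scoped MatrixOrder in
theorem exists_projective_sameState {p : A → A → X → X → ℝ}
    (hsync : ∀ (x : X) (a b : A), a ≠ b → p a b x x = 0) (S : QModel X X A A)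
    (hS : Realizes S p) :
    ∃ S' : QModel X X A A, Projective S' ∧ Realizes S' p ∧ SameState S S' := by
  set Φ := stateMatrix S.ψ
  have horthN (x : X) (a b : A) (hab : a ≠ b) : S.N x a * Φ * (S.M x b)ᵀ = 0 :=
    stateMatrix_mul_mul_eq_zero hS (hsync x b a hab.symm)
  have horthM (x : X) (a b : A) (hab : a ≠ b) : S.M x a * Φᵀ * (S.N x b)ᵀ = 0 := by
    simpa only [transpose_mul, transpose_transpose, transpose_zero, Matrix.mul_assoc] using
      congrArg transpose (horthN x b a hab.symm)
  obtain ⟨M', hM'proj, hM'sum, hM'word⟩ := exists_projective_povm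
    (fun x a => (S.M_pos x a).isHermitian) S.M_sum Φᵀ
    (fun x a => ⟨_, mul_eq_mul_transpose_of_orthogonal (S.M_sum x) (S.N_sum x) (horthM x) a⟩)
    (fun x => mul_self_mul_eq_of_orthogonal (S.M_sum x) (S.N_sum x) (horthM x))
  obtain ⟨N', hN'proj, hN'sum, hN'word⟩ := exists_projective_povm
    (fun x a => (S.N_pos x a).isHermitian) S.N_sum Φ
    (fun x a => ⟨_, mul_eq_mul_transpose_of_orthogonal (S.N_sum x) (S.M_sum x) (horthN x) a⟩)
    (fun x => mul_self_mul_eq_of_orthogonal (S.N_sum x) (S.M_sum x) (horthN x))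
  let S' : QModel X X A A :=
    { dA := S.dA, dB := S.dB, M := M', N := N', ψ := S.ψ
      M_pos := fun x a => (hM'proj x a).nonneg.posSemidef, M_sum := hM'sum
      N_pos := fun x a => (hN'proj x a).nonneg.posSemidef, N_sum := hN'sum
      ψ_unit := S.ψ_unit }
  have hsame : SameState S S' := fun wA wB =>
    congrArg (qInner S.ψ) (kronecker_mulVec_congr (hM'word wA) (hN'word wB)).symm
  refine ⟨S', ⟨fun x a => ⟨(hM'proj x a).isSelfAdjoint, (hM'proj x a).isIdempotentElem⟩,
    fun x a => ⟨(hN'proj x a).isSelfAdjoint, (hN'proj x a).isIdempotentElem⟩⟩,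
    hS.of_sameState hsame, hsame⟩

theorem statement17_general {X A : Type} [Fintype A]
    (p : A → A → X → X → ℝ)
    (hsync : ∀ (x : X) (a b : A), a ≠ b → p a b x x = 0) :
    (∀ S : QModel X X A A, Realizes S p →
      ∃ S' : QModel X X A A, Projective S' ∧ Realizes S' p ∧ SameState S S')
    ∧ ((∀ S S' : QModel X X A A, Realizes S p → Realizes S' p → SameState S S') ↔
       (∀ S S' : QModel X X A A, Projective S → Projective S' →
          Realizes S p → Realizes S' p → SameState S S')) := by
  refine ⟨exists_projective_sameState hsync, fun h S S' _ _ => h S S', fun h S S' hS hS' => ?_⟩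
  obtain ⟨T, hT, hTp, hST⟩ := exists_projective_sameState hsync S hS
  obtain ⟨T', hT', hT'p, hST'⟩ := exists_projective_sameState hsync S' hS'
  intro wA wB
  rw [hST, h T T' hT hT' hTp hT'p, ← hST']

/-- For a synchronous quantum correlation `p`, the abstract state of any model
for `p` is projective, and hence `p` is an abstract state self-test for all models iff it is
one for projective models. -/
theorem statement17 {X A : Type} [Fintype A]
    (p : A → A → X → X → ℝ)
    (hp : p ∈ CqSet X X A A)
    (hsync : ∀ (x : X) (a b : A), a ≠ b → p a b x x = 0) :
    (∀ S : QModel X X A A, Realizes S p →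
      ∃ S' : QModel X X A A, Projective S' ∧ Realizes S' p ∧ SameState S S')
    ∧ ((∀ S S' : QModel X X A A, Realizes S p → Realizes S' p → SameState S S') ↔
       (∀ S S' : QModel X X A A, Projective S → Projective S' →
          Realizes S p → Realizes S' p → SameState S S')) :=
  statement17_general p hsync

end SelfTestPaper
end
end
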